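/- arXiv:2412.11999 — 6 statements merged into one kernel-verified Lean document; each statement's English description precedes it below -/
import Mathlib

section
/- For every permutation π of {1,...,n}, the sum of the inversion number and the reflection length of π is at most the total displacement of π: I(π) + T(π) ≤ D(π). -/
open Equiv Finset

/-- Total displacement D(π) = Σ |π(i) - i|. -/
def dispD {n : ℕ} (π : Equiv.Perm (Fin n)) : ℕ :=
  ∑ i : Fin n, ((π i : ℤ) - (i : ℤ)).natAbs

/-- Inversion number I(π). -/
def invNum {n : ℕ} (π : Equiv.Perm (Fin n)) : ℕ :=
  (Finset.univ.filter (fun p : Fin n × Fin n => p.1 < p.2 ∧ π p.2 < π p.1)).card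

/-- Number of cycles of π, counting fixed points as cycles. -/
def cycNum {n : ℕ} (π : Equiv.Perm (Fin n)) : ℕ :=
  π.cycleType.card + (Finset.univ.filter (fun i => π i = i)).card

/-- Reflection length T(π) = n - cyc(π). -/
def reflLen {n : ℕ} (π : Equiv.Perm (Fin n)) : ℕ :=
  n - cycNum π

/-- A permutation is shallow when I(π) + T(π) = D(π). -/
def IsShallow {n : ℕ} (π : Equiv.Perm (Fin n)) : Prop :=
  invNum π + reflLen π = dispD π

namespace DGaux

open Equiv.Perm

variable {n : ℕ}

/-- The cycle (orbit) of `x` under `σ`, as a finset. -/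
def cls (σ : Equiv.Perm (Fin n)) (x : Fin n) : Finset (Fin n) :=
  univ.filter (fun y => σ.SameCycle x y)

lemma cls_nonempty (σ : Equiv.Perm (Fin n)) (x : Fin n) : (cls σ x).Nonempty :=
  ⟨x, by simp [cls, Equiv.Perm.SameCycle.refl]⟩

/-- Minimal representative of the cycle of `x`. -/
def rep (σ : Equiv.Perm (Fin n)) (x : Fin n) : Fin n :=
  (cls σ x).min' (cls_nonempty σ x)

lemma sameCycle_rep (σ : Equiv.Perm (Fin n)) (x : Fin n) : σ.SameCycle x (rep σ x) :=
  (mem_filter.1 ((cls σ x).min'_mem (cls_nonempty σ x))).2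

lemma cls_congr {σ : Equiv.Perm (Fin n)} {x y : Fin n} (h : σ.SameCycle x y) :
    cls σ x = cls σ y := by
  ext z
  simp only [cls, mem_filter, mem_univ, true_and]
  exact ⟨fun h' => h.symm.trans h', fun h' => h.trans h'⟩

lemma rep_congr {σ : Equiv.Perm (Fin n)} {x y : Fin n} (h : σ.SameCycle x y) :
    rep σ x = rep σ y := by
  unfold rep
  congr 1
  exact cls_congr h

lemma rep_idem (σ : Equiv.Perm (Fin n)) (x : Fin n) : rep σ (rep σ x) = rep σ x :=
  (rep_congr (sameCycle_rep σ x)).symm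

lemma sameCycle_fixed {σ : Equiv.Perm (Fin n)} {x y : Fin n} (h : σ x = x)
    (hxy : σ.SameCycle x y) : y = x := by
  obtain ⟨i, hi⟩ := hxy
  rw [Equiv.Perm.zpow_apply_eq_self_of_apply_eq_self h i] at hi
  exact hi.symm

lemma rep_fixed {σ : Equiv.Perm (Fin n)} {x : Fin n} (h : σ x = x) : rep σ x = x := by
  have : cls σ x = {x} := by
    ext y
    simp only [cls, mem_filter, mem_univ, true_and, mem_singleton]
    constructor
    · exact fun h' => sameCycle_fixed h h'
    · rintro rfl; exact Equiv.Perm.SameCycle.refl σ _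
  unfold rep
  simp [this]

lemma fixed_of_sameCycle {σ : Equiv.Perm (Fin n)} {x y : Fin n} (h : σ.SameCycle x y)
    (hy : σ y = y) : σ x = x := by
  have := sameCycle_fixed hy h.symm
  rw [this]; exact hy

lemma cycNum_eq (σ : Equiv.Perm (Fin n)) : cycNum σ = (univ.image (rep σ)).card := by
  classical
  have hrepmem : ∀ m ∈ univ.image (rep σ), rep σ m = m := by
    intro m hm
    obtain ⟨x, -, rfl⟩ := mem_image.1 hm
    exact rep_idem σ x
  have hsplit :=
    card_filter_add_card_filter_not (s := univ.image (rep σ))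
      (p := fun m => σ m = m)
  have claim1 : (univ.image (rep σ)).filter (fun m => σ m = m)
      = univ.filter (fun i => σ i = i) := by
    ext m
    simp only [mem_filter, mem_univ, true_and, mem_image, and_iff_right_iff_imp]
    intro hm
    exact ⟨m, rep_fixed hm⟩

  have claim2 : ((univ.image (rep σ)).filter (fun m => ¬ σ m = m)).card
      = σ.cycleFactorsFinset.card := by
    apply card_bij (fun m _ => σ.cycleOf m)
    · intro m hm
      have hm' := (mem_filter.1 hm).2
      exact cycleOf_mem_cycleFactorsFinset_iff.2 (mem_support.2 hm')
    · intro m1 h1 m2 h2 heq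
      have hm2 : σ m2 ≠ m2 := (mem_filter.1 h2).2
      have hmem : m2 ∈ (σ.cycleOf m1).support := by
        rw [heq]
        exact mem_support_cycleOf_iff.2 ⟨Equiv.Perm.SameCycle.refl σ m2, mem_support.2 hm2⟩
      have hsc : σ.SameCycle m1 m2 := (mem_support_cycleOf_iff.1 hmem).1
      have e1 := hrepmem m1 (mem_of_mem_filter _ h1)
      have e2 := hrepmem m2 (mem_of_mem_filter _ h2)
      rw [← e1, ← e2]
      exact rep_congr hsc
    · intro c hc
      obtain ⟨hcyc, hsupp⟩ := mem_cycleFactorsFinset_iff.1 hc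
      obtain ⟨x, hx, -⟩ := hcyc
      have hxc : x ∈ c.support := mem_support.2 hx
      have hcx : c = σ.cycleOf x := cycle_is_cycleOf hxc hc
      have hxσ : σ x ≠ x := by
        have := hsupp x hxc
        rw [← this]; exact hx
      have hmoved : σ (rep σ x) ≠ rep σ x := by
        intro h
        exact hxσ (fixed_of_sameCycle (sameCycle_rep σ x) h)
      refine ⟨rep σ x, ?_, ?_⟩
      · exact mem_filter.2 ⟨mem_image.2 ⟨x, mem_univ x, rfl⟩, hmoved⟩
      · rw [hcx]
        exact ((sameCycle_rep σ x).cycleOf_eq).symm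
  have hct : σ.cycleType.card = σ.cycleFactorsFinset.card := by
    rw [Equiv.Perm.cycleType_def]
    exact Multiset.card_map _ _
  unfold cycNum
  rw [hct, ← claim1]
  omega

end DGaux

namespace DGaux

variable {n : ℕ}

/-- The relation whose classes are those of `σ`, with the classes of `a` and `b` merged. -/
def SRel (σ : Equiv.Perm (Fin n)) (a b x y : Fin n) : Prop :=
  σ.SameCycle x y ∨ ((σ.SameCycle x a ∨ σ.SameCycle x b) ∧ (σ.SameCycle y a ∨ σ.SameCycle y b))

lemma srefl (σ : Equiv.Perm (Fin n)) (a b x : Fin n) : SRel σ a b x x :=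
  Or.inl (Equiv.Perm.SameCycle.refl σ x)

lemma ssymm {σ : Equiv.Perm (Fin n)} {a b x y : Fin n} (h : SRel σ a b x y) :
    SRel σ a b y x := by
  rcases h with h | ⟨h1, h2⟩
  · exact Or.inl h.symm
  · exact Or.inr ⟨h2, h1⟩

lemma strans {σ : Equiv.Perm (Fin n)} {a b x y z : Fin n} (h : SRel σ a b x y)
    (h' : SRel σ a b y z) : SRel σ a b x z := by
  rcases h with h | ⟨h1, h2⟩
  · rcases h' with h' | ⟨h1', h2'⟩
    · exact Or.inl (h.trans h')
    · refine Or.inr ⟨?_, h2'⟩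
      rcases h1' with hy | hy
      · exact Or.inl (h.trans hy)
      · exact Or.inr (h.trans hy)
  · rcases h' with h' | ⟨h1', h2'⟩
    · refine Or.inr ⟨h1, ?_⟩
      rcases h2 with hy | hy
      · exact Or.inl (h'.symm.trans hy)
      · exact Or.inr (h'.symm.trans hy)
    · exact Or.inr ⟨h1, h2'⟩

instance (σ : Equiv.Perm (Fin n)) (a b x y : Fin n) : Decidable (SRel σ a b x y) := by
  unfold SRel; infer_instance

/-- Minimal representative of the merged class. -/
def repS (σ : Equiv.Perm (Fin n)) (a b x : Fin n) : Fin n :=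
  (univ.filter (fun y => SRel σ a b x y)).min'
    ⟨x, mem_filter.2 ⟨mem_univ x, srefl σ a b x⟩⟩

lemma srel_repS (σ : Equiv.Perm (Fin n)) (a b x : Fin n) : SRel σ a b x (repS σ a b x) :=
  (mem_filter.1 (Finset.min'_mem _ _)).2

lemma repS_congr {σ : Equiv.Perm (Fin n)} {a b x y : Fin n} (h : SRel σ a b x y) :
    repS σ a b x = repS σ a b y := by
  unfold repS
  congr 1
  ext z
  simp only [mem_filter, mem_univ, true_and]
  exact ⟨fun h' => strans (ssymm h) h', fun h' => strans h h'⟩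

lemma srel_step (σ : Equiv.Perm (Fin n)) (a b y : Fin n) :
    SRel σ a b y ((σ * Equiv.swap a b) y) := by
  have happ : ∀ z : Fin n, σ.SameCycle z (σ z) :=
    fun z => Equiv.Perm.sameCycle_apply_right.2 (Equiv.Perm.SameCycle.refl σ z)
  by_cases hya : y = a
  · have : (σ * Equiv.swap a b) y = σ b := by
      rw [Equiv.Perm.mul_apply, hya, Equiv.swap_apply_left]
    rw [this]
    exact Or.inr ⟨Or.inl (by rw [hya]), Or.inr (happ b).symm⟩
  · by_cases hyb : y = b
    · have : (σ * Equiv.swap a b) y = σ a := by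
        rw [Equiv.Perm.mul_apply, hyb, Equiv.swap_apply_right]
      rw [this]
      exact Or.inr ⟨Or.inr (by rw [hyb]), Or.inl (happ a).symm⟩
    · have : (σ * Equiv.swap a b) y = σ y := by
        rw [Equiv.Perm.mul_apply, Equiv.swap_apply_of_ne_of_ne hya hyb]
      rw [this]
      exact Or.inl (happ y)

lemma srel_pow (σ : Equiv.Perm (Fin n)) (a b x : Fin n) :
    ∀ i : ℕ, SRel σ a b x (((σ * Equiv.swap a b) ^ i) x)
  | 0 => by simpa using srefl σ a b x
  | (k + 1) => by
      have hstep : ((σ * Equiv.swap a b) ^ (k + 1)) x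
          = (σ * Equiv.swap a b) (((σ * Equiv.swap a b) ^ k) x) := by
        rw [pow_succ']
        rfl
      rw [hstep]
      exact strans (srel_pow σ a b x k) (srel_step σ a b _)

lemma srel_of_sameCycle_mul (σ : Equiv.Perm (Fin n)) (a b x y : Fin n)
    (h : (σ * Equiv.swap a b).SameCycle x y) : SRel σ a b x y := by
  obtain ⟨i, -, rfl⟩ := h.exists_pow_eq'
  exact srel_pow σ a b x i

lemma cycNum_mul_swap_le (σ : Equiv.Perm (Fin n)) (a b : Fin n) :
    cycNum σ ≤ cycNum (σ * Equiv.swap a b) + 1 := by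
  classical
  rw [cycNum_eq, cycNum_eq]
  set σ' := σ * Equiv.swap a b with hσ'
  have hrepmem : ∀ m ∈ univ.image (rep σ), rep σ m = m := by
    intro m hm
    obtain ⟨x, -, rfl⟩ := mem_image.1 hm
    exact rep_idem σ x
  have hkey : ∀ x : Fin n, repS σ a b (rep σ' x) = repS σ a b x :=
    fun x => (repS_congr (srel_of_sameCycle_mul σ a b x _ (sameCycle_rep σ' x))).symm
  have h2 : (univ.image (fun x => repS σ a b x)).card ≤ (univ.image (rep σ')).card := by
    have himg : univ.image (fun x => repS σ a b x)
        = (univ.image (rep σ')).image (fun x => repS σ a b x) := by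
      ext m
      simp only [mem_image]
      constructor
      · rintro ⟨x, -, rfl⟩
        exact ⟨rep σ' x, ⟨x, mem_univ x, rfl⟩, hkey x⟩
      · rintro ⟨y, ⟨x, -, rfl⟩, rfl⟩
        exact ⟨rep σ' x, mem_univ _, rfl⟩
    rw [himg]
    exact card_image_le
  have h3 : (univ.image (rep σ)).card ≤ (univ.image (fun x => repS σ a b x)).card + 1 := by
    have hinj : ∀ m1 ∈ (univ.image (rep σ)).erase (rep σ b),
        ∀ m2 ∈ (univ.image (rep σ)).erase (rep σ b),
        repS σ a b m1 = repS σ a b m2 → m1 = m2 := by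
      intro m1 h1 m2 h2 heq
      have hm1 := hrepmem m1 (mem_of_mem_erase h1)
      have hm2 := hrepmem m2 (mem_of_mem_erase h2)
      have hs : SRel σ a b m1 m2 := by
        have u1 := srel_repS σ a b m1
        have u2 := srel_repS σ a b m2
        rw [heq] at u1
        exact strans u1 (ssymm u2)
      rcases hs with hs | ⟨hc1, hc2⟩
      · rw [← hm1, ← hm2]; exact rep_congr hs
      · have e1 : m1 = rep σ a := by
          rcases hc1 with h | h
          · rw [← hm1]; exact rep_congr h
          · exact absurd (hm1 ▸ rep_congr h) (ne_of_mem_erase h1)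
        have e2 : m2 = rep σ a := by
          rcases hc2 with h | h
          · rw [← hm2]; exact rep_congr h
          · exact absurd (hm2 ▸ rep_congr h) (ne_of_mem_erase h2)
        rw [e1, e2]
    have hmaps : ∀ m ∈ (univ.image (rep σ)).erase (rep σ b),
        repS σ a b m ∈ univ.image (fun x => repS σ a b x) := by
      intro m _
      exact mem_image.2 ⟨m, mem_univ m, rfl⟩
    have hcard := Finset.card_le_card_of_injOn _ hmaps hinj
    have herase : (univ.image (rep σ)).card
        ≤ ((univ.image (rep σ)).erase (rep σ b)).card + 1 := by
      by_cases hmem : rep σ b ∈ univ.image (rep σ)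
      · rw [card_erase_of_mem hmem]
        have := Finset.card_pos.2 ⟨_, hmem⟩
        omega
      · rw [erase_eq_of_notMem hmem]
        omega
    omega
  omega

lemma reflLen_le_mul_swap (π : Equiv.Perm (Fin n)) (a b : Fin n) :
    reflLen π ≤ reflLen (π * Equiv.swap a b) + 1 := by
  have h := cycNum_mul_swap_le (π * Equiv.swap a b) a b
  rw [mul_assoc, Equiv.swap_mul_self, mul_one] at h
  unfold reflLen
  omega

end DGaux

namespace DGaux

variable {n : ℕ}

lemma invNum_le_mul_swap (π : Equiv.Perm (Fin n)) (a b : Fin n) (hab : a < b) :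
    invNum π ≤ invNum (π * Equiv.swap a b) + (2 * ((b : ℕ) - (a : ℕ)) - 1) := by
  classical
  have habv : (a : ℕ) < (b : ℕ) := hab
  set τ := Equiv.swap a b with hτ
  set A := univ.filter (fun p : Fin n × Fin n => p.1 < p.2 ∧ π p.2 < π p.1) with hA
  set B := univ.filter
    (fun p : Fin n × Fin n => p.1 < p.2 ∧ (π * τ) p.2 < (π * τ) p.1) with hB
  set P := (({a} ×ˢ Ioc a b) ∪ ((Ico a b) ×ˢ {b}) : Finset (Fin n × Fin n)) with hP
  have hPcard : P.card ≤ 2 * ((b : ℕ) - (a : ℕ)) - 1 := by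
    have h1 : (({a} ×ˢ Ioc a b) : Finset (Fin n × Fin n)).card = (b : ℕ) - (a : ℕ) := by
      rw [card_product, card_singleton, one_mul, Fin.card_Ioc]
    have h2 : (((Ico a b) ×ˢ {b}) : Finset (Fin n × Fin n)).card = (b : ℕ) - (a : ℕ) := by
      rw [card_product, card_singleton, mul_one, Fin.card_Ico]
    have hmem : ((a, b) : Fin n × Fin n) ∈ ({a} ×ˢ Ioc a b) ∩ ((Ico a b) ×ˢ {b}) := by
      simp [Finset.mem_inter, Finset.mem_product, Finset.mem_Ioc, Finset.mem_Ico, hab, le_of_lt hab]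
    have hpos : 1 ≤ (({a} ×ˢ Ioc a b) ∩ ((Ico a b) ×ˢ {b})).card :=
      Finset.card_pos.2 ⟨_, hmem⟩
    have hsum := Finset.card_union_add_card_inter ({a} ×ˢ Ioc a b) ((Ico a b) ×ˢ {b})
    rw [h1, h2] at hsum
    rw [hP]
    omega
  have hkey : A.card ≤ (A \ P).card + P.card := Finset.card_le_card_sdiff_add_card
  have h2 : (A \ P).card ≤ B.card := by
    apply Finset.card_le_card_of_injOn (fun p => (τ p.1, τ p.2))
    · intro p hp
      obtain ⟨hpA, hpP⟩ := mem_sdiff.1 hp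
      obtain ⟨hlt, hinv⟩ := (mem_filter.1 hpA).2
      simp only [hP, mem_union, mem_product, mem_singleton, mem_Ioc, mem_Ico] at hpP
      push_neg at hpP
      obtain ⟨hnp1, hnp2⟩ := hpP
      have horder : τ p.1 < τ p.2 := by
        by_cases e1 : p.1 = a
        · have hbp2 : b < p.2 := hnp1 e1 (e1 ▸ hlt)
          have hp2a : p.2 ≠ a := by intro h; rw [h] at hbp2; exact absurd (hab.trans hbp2) (lt_irrefl a)
          have hp2b : p.2 ≠ b := ne_of_gt hbp2
          rw [hτ, e1, Equiv.swap_apply_left, Equiv.swap_apply_of_ne_of_ne hp2a hp2b]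
          exact hbp2
        · by_cases e1b : p.1 = b
          · have hbp2 : b < p.2 := e1b ▸ hlt
            have hp2a : p.2 ≠ a := by intro h; rw [h] at hbp2; exact absurd (hab.trans hbp2) (lt_irrefl a)
            have hp2b : p.2 ≠ b := ne_of_gt hbp2
            rw [hτ, e1b, Equiv.swap_apply_right, Equiv.swap_apply_of_ne_of_ne hp2a hp2b]
            exact lt_trans hab hbp2
          · rw [hτ, Equiv.swap_apply_of_ne_of_ne e1 e1b]
            by_cases e2 : p.2 = a
            · rw [e2, Equiv.swap_apply_left]
              exact lt_trans (e2 ▸ hlt) hab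
            · by_cases e2b : p.2 = b
              · have hp1a : p.1 < a := by
                  by_contra hle
                  push_neg at hle
                  exact (hnp2 ⟨hle, e2b ▸ hlt⟩) e2b
                rw [e2b, Equiv.swap_apply_right]
                exact hp1a
              · rw [Equiv.swap_apply_of_ne_of_ne e2 e2b]
                exact hlt
      refine mem_filter.2 ⟨mem_univ _, horder, ?_⟩
      simp only [hτ, Equiv.Perm.mul_apply, Equiv.swap_apply_self]
      exact hinv
    · intro p hp q hq h
      simp only [Prod.mk.injEq] at h
      exact Prod.ext (τ.injective h.1) (τ.injective h.2)
  have hAeq : invNum π = A.card := rfl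
  have hBeq : invNum (π * τ) = B.card := rfl
  omega

lemma dispD_eq_mul_swap (π : Equiv.Perm (Fin n)) (a b : Fin n) (hab : a < b)
    (h1 : b ≤ π a) (h2 : π b ≤ a) :
    dispD (π * Equiv.swap a b) + 2 * ((b : ℕ) - (a : ℕ)) = dispD π := by
  classical
  have hne : a ≠ b := ne_of_lt hab
  have hsum : ∀ σ : Equiv.Perm (Fin n),
      dispD σ = (∑ i ∈ univ \ {a, b}, ((σ i : ℤ) - (i : ℤ)).natAbs)
        + (((σ a : ℤ) - (a : ℤ)).natAbs + ((σ b : ℤ) - (b : ℤ)).natAbs) := by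
    intro σ
    rw [dispD, ← Finset.sum_sdiff (Finset.subset_univ ({a, b} : Finset (Fin n)))]
    congr 1
    rw [Finset.sum_pair hne]
  rw [hsum, hsum π]
  have hc : ∀ i ∈ univ \ ({a, b} : Finset (Fin n)),
      (((π * Equiv.swap a b) i : ℤ) - (i : ℤ)).natAbs = ((π i : ℤ) - (i : ℤ)).natAbs := by
    intro i hi
    simp only [mem_sdiff, mem_univ, true_and, mem_insert, mem_singleton, not_or] at hi
    rw [Equiv.Perm.mul_apply, Equiv.swap_apply_of_ne_of_ne hi.1 hi.2]
  rw [Finset.sum_congr rfl hc]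
  have ea : (π * Equiv.swap a b) a = π b := by
    rw [Equiv.Perm.mul_apply, Equiv.swap_apply_left]
  have eb : (π * Equiv.swap a b) b = π a := by
    rw [Equiv.Perm.mul_apply, Equiv.swap_apply_right]
  rw [ea, eb]
  have habv : (a : ℕ) < (b : ℕ) := hab
  have h1v : (b : ℕ) ≤ ((π a : Fin n) : ℕ) := h1
  have h2v : ((π b : Fin n) : ℕ) ≤ (a : ℕ) := h2
  omega

lemma exists_cross (π : Equiv.Perm (Fin n)) (hπ : π ≠ 1) :
    ∃ a b : Fin n, a < b ∧ b ≤ π a ∧ π b ≤ a := by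
  classical
  have hex : ∃ i : Fin n, π i < i := by
    by_contra hno
    push_neg at hno
    apply hπ
    have hsum : ∑ i : Fin n, ((π i : ℕ)) = ∑ i : Fin n, (i : ℕ) :=
      Equiv.sum_comp π (fun i => (i : ℕ))
    have hfix : ∀ j : Fin n, π j = j := by
      intro j
      by_contra hj
      have hlt : (j : ℕ) < ((π j : Fin n) : ℕ) := by
        have hle : (j : ℕ) ≤ ((π j : Fin n) : ℕ) := hno j
        have : (j : ℕ) ≠ ((π j : Fin n) : ℕ) := by
          intro h
          exact hj (Fin.ext h.symm)
        omega
      have hstrict : (∑ i : Fin n, (i : ℕ)) < ∑ i : Fin n, ((π i : ℕ)) :=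
        Finset.sum_lt_sum (fun i _ => hno i) ⟨j, mem_univ j, hlt⟩
      omega
    exact Equiv.ext hfix
  set F := univ.filter (fun i : Fin n => π i < i) with hF
  have hFne : F.Nonempty := by
    obtain ⟨i, hi⟩ := hex
    exact ⟨i, mem_filter.2 ⟨mem_univ i, hi⟩⟩
  set b := F.min' hFne with hb
  have hbF : π b < b := (mem_filter.1 (F.min'_mem hFne)).2
  have hmin : ∀ i : Fin n, π i < i → b ≤ i := fun i hi =>
    F.min'_le i (mem_filter.2 ⟨mem_univ i, hi⟩)
  have hsubex : ∃ a ∈ Finset.Ico (π b) b, b ≤ π a := by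
    by_contra hno
    push_neg at hno
    have hmaps : ∀ i ∈ Finset.Ico (π b) b, π i ∈ Finset.Ioo (π b) b := by
      intro i hi
      obtain ⟨hvi, hib⟩ := mem_Ico.1 hi
      have hlt : π i < b := hno i hi
      have hge : i ≤ π i := by
        by_contra hcon
        push_neg at hcon
        exact absurd (hmin i hcon) (not_le.2 hib)
      have hne : π i ≠ π b := fun h => (ne_of_lt hib) (π.injective h)
      refine mem_Ioo.2 ⟨?_, hlt⟩
      exact lt_of_le_of_ne (le_trans hvi hge) (Ne.symm hne)
    have hcard := Finset.card_le_card_of_injOn π hmaps (π.injective.injOn)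
    rw [Fin.card_Ico, Fin.card_Ioo] at hcard
    have hvb : ((π b : Fin n) : ℕ) < (b : ℕ) := hbF
    omega
  obtain ⟨a, ha, hba⟩ := hsubex
  obtain ⟨hva, hab⟩ := mem_Ico.1 ha
  exact ⟨a, b, hab, hba, hva⟩

lemma invNum_one : invNum (1 : Equiv.Perm (Fin n)) = 0 := by
  rw [invNum, Finset.card_eq_zero, Finset.filter_eq_empty_iff]
  rintro p -
  rintro ⟨h1, h2⟩
  simp only [Equiv.Perm.one_apply] at h2
  exact absurd h2 (not_lt.2 (le_of_lt h1))

lemma reflLen_one : reflLen (1 : Equiv.Perm (Fin n)) = 0 := by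
  have : cycNum (1 : Equiv.Perm (Fin n)) = n := by
    rw [cycNum, Equiv.Perm.cycleType_one]
    simp
  rw [reflLen, this]
  omega

end DGaux

theorem stmt0 (n : ℕ) (π : Equiv.Perm (Fin n)) :
    invNum π + reflLen π ≤ dispD π := by
  suffices H : ∀ (d : ℕ) (σ : Equiv.Perm (Fin n)), dispD σ = d →
      invNum σ + reflLen σ ≤ dispD σ from H _ π rfl
  intro d
  induction d using Nat.strong_induction_on with
  | _ d IH =>
    intro σ hd
    by_cases hσ : σ = 1
    · subst hσ
      simp [DGaux.invNum_one, DGaux.reflLen_one]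
    · obtain ⟨a, b, hab, h1, h2⟩ := DGaux.exists_cross σ hσ
      have hD := DGaux.dispD_eq_mul_swap σ a b hab h1 h2
      have hI := DGaux.invNum_le_mul_swap σ a b hab
      have hT := DGaux.reflLen_le_mul_swap σ a b
      have hpos : 1 ≤ (b : ℕ) - (a : ℕ) := by
        have : (a : ℕ) < (b : ℕ) := hab
        omega
      have hlt : dispD (σ * Equiv.swap a b) < d := by omega
      have IH' := IH _ hlt (σ * Equiv.swap a b) rfl
      omega
end

section
/- For every permutation π of {1,...,n}, the total displacement of π is at most twice the inversion number: D(π) ≤ 2·I(π). -/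
open Equiv Finset

private lemma card_lt_self {n : ℕ} (c : Fin n) :
    (Finset.univ.filter (fun j : Fin n => j < c)).card = (c : ℕ) := by
  have : Finset.univ.filter (fun j : Fin n => j < c) = Finset.Iio c := by
    ext j; simp
  rw [this, Fin.card_Iio]

private lemma key_card {n : ℕ} (π : Equiv.Perm (Fin n)) (i : Fin n) :
    (Finset.univ.filter (fun j : Fin n => π j < π i)).card = ((π i : ℕ)) := by
  have h : Finset.univ.filter (fun j : Fin n => π j < π i)
      = (Finset.univ.filter (fun j : Fin n => j < π i)).image π.symm := by
    ext j
    simp only [mem_filter, mem_univ, true_and, mem_image]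
    constructor
    · intro hj; exact ⟨π j, hj, π.symm_apply_apply j⟩
    · rintro ⟨k, hk, rfl⟩; simpa using hk
  rw [h, Finset.card_image_of_injective _ π.symm.injective, card_lt_self]

theorem stmt1 (n : ℕ) (π : Equiv.Perm (Fin n)) :
    dispD π ≤ 2 * invNum π := by
  have hf : ∀ i : Fin n, ((π i : ℤ) - (i : ℤ)) =
      (∑ j : Fin n, (if i < j ∧ π j < π i then (1:ℤ) else 0))
      - (∑ j : Fin n, (if j < i ∧ π i < π j then (1:ℤ) else 0)) := by
    intro i
    have h1 : ((π i : ℕ) : ℤ) = ∑ j : Fin n, (if π j < π i then (1:ℤ) else 0) := by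
      rw [← key_card π i, Finset.card_filter]
      push_cast
      rfl
    have h2 : ((i : ℕ) : ℤ) = ∑ j : Fin n, (if j < i then (1:ℤ) else 0) := by
      rw [← card_lt_self i, Finset.card_filter]
      push_cast
      rfl
    rw [h1, h2, ← Finset.sum_sub_distrib, ← Finset.sum_sub_distrib]
    apply Finset.sum_congr rfl
    intro j _
    rcases lt_trichotomy i j with h | h | h
    · by_cases hp : π j < π i <;> simp [h, h.asymm, hp]
    · subst h; simp
    · have hne : π j ≠ π i := fun h' => (ne_of_gt h) (π.injective h'.symm)
      by_cases hp : π j < π i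
      · simp [h, h.asymm, hp, hp.asymm]
      · have hp' : π i < π j := lt_of_le_of_ne (not_lt.mp hp) (Ne.symm hne)
        simp [h, lt_asymm h, hp, hp']
  have habs : ∀ i : Fin n, |((π i : ℤ) - (i : ℤ))| ≤
      (∑ j : Fin n, (if i < j ∧ π j < π i then (1:ℤ) else 0))
      + (∑ j : Fin n, (if j < i ∧ π i < π j then (1:ℤ) else 0)) := by
    intro i
    rw [hf i]
    have n1 : (0:ℤ) ≤ ∑ j : Fin n, (if i < j ∧ π j < π i then (1:ℤ) else 0) :=
      Finset.sum_nonneg (fun j _ => by positivity)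
    have n2 : (0:ℤ) ≤ ∑ j : Fin n, (if j < i ∧ π i < π j then (1:ℤ) else 0) :=
      Finset.sum_nonneg (fun j _ => by positivity)
    calc |_ - _| ≤ |_| + |_| := abs_sub _ _
      _ = _ + _ := by rw [abs_of_nonneg n1, abs_of_nonneg n2]
  have hinv1 : ((invNum π : ℕ) : ℤ)
      = ∑ i : Fin n, ∑ j : Fin n, (if i < j ∧ π j < π i then (1:ℤ) else 0) := by
    rw [invNum, Finset.card_filter]
    push_cast
    exact Fintype.sum_prod_type _
  have hinv2 : ((invNum π : ℕ) : ℤ)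
      = ∑ i : Fin n, ∑ j : Fin n, (if j < i ∧ π i < π j then (1:ℤ) else 0) := by
    rw [hinv1, Finset.sum_comm]
  have : ((dispD π : ℕ) : ℤ) ≤ 2 * ((invNum π : ℕ) : ℤ) := by
    rw [dispD]
    push_cast
    calc ∑ i : Fin n, |((π i : ℤ) - (i : ℤ))|
        ≤ ∑ i : Fin n, ((∑ j : Fin n, (if i < j ∧ π j < π i then (1:ℤ) else 0))
          + (∑ j : Fin n, (if j < i ∧ π i < π j then (1:ℤ) else 0))) :=
          Finset.sum_le_sum (fun i _ => habs i)
      _ = 2 * ((invNum π : ℕ) : ℤ) := by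
          rw [Finset.sum_add_distrib, ← hinv1, ← hinv2]; ring
  exact_mod_cast this
end

section
/- If π is a shallow permutation of {1,...,n}, then its reverse-complement π^{rc}, defined by π^{rc}(i) = n+1-π(n+1-i), is also shallow. -/
open Equiv Finset

/-- Reverse-complement: π^{rc}(i) = n+1-π(n+1-i) (zero-indexed via Fin.rev). -/
def rcPerm {n : ℕ} (π : Equiv.Perm (Fin n)) : Equiv.Perm (Fin n) :=
  (Fin.revPerm.trans π).trans Fin.revPerm


lemma rcPerm_apply {n : ℕ} (π : Equiv.Perm (Fin n)) (i : Fin n) :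
    rcPerm π i = (π i.rev).rev := rfl

lemma rcPerm_eq_conj {n : ℕ} (π : Equiv.Perm (Fin n)) :
    rcPerm π = Fin.revPerm * π * Fin.revPerm⁻¹ := by
  have hinv : Fin.revPerm⁻¹ = (Fin.revPerm : Equiv.Perm (Fin n)) := rfl
  ext i
  rw [hinv]
  simp [rcPerm_apply, Equiv.Perm.mul_apply]

lemma dispD_rc {n : ℕ} (π : Equiv.Perm (Fin n)) : dispD (rcPerm π) = dispD π := by
  unfold dispD
  rw [← Equiv.sum_comp Fin.revPerm (fun i => (((rcPerm π) i : ℤ) - (i : ℤ)).natAbs)]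
  apply Finset.sum_congr rfl
  intro j _
  have h1 : rcPerm π (Fin.revPerm j) = (π j).rev := by
    simp [rcPerm_apply]
  rw [h1]
  simp only [Fin.revPerm_apply]
  have h2 : ((π j).rev : ℤ) = (n : ℤ) - 1 - (π j : ℤ) := by
    have := (π j).isLt
    simp [Fin.val_rev]; omega
  have h3 : ((j.rev : Fin n) : ℤ) = (n : ℤ) - 1 - (j : ℤ) := by
    have := j.isLt
    simp [Fin.val_rev]; omega
  rw [h2, h3]
  omega

lemma invNum_rc {n : ℕ} (π : Equiv.Perm (Fin n)) : invNum (rcPerm π) = invNum π := by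
  unfold invNum
  apply Finset.card_bij (fun p _ => (p.2.rev, p.1.rev))
  · rintro ⟨a, b⟩ hp
    simp only [Finset.mem_filter, Finset.mem_univ, true_and] at hp ⊢
    obtain ⟨hab, hv⟩ := hp
    constructor
    · exact Fin.rev_lt_rev.mpr hab
    · simp only [rcPerm_apply] at hv
      exact Fin.rev_lt_rev.mp hv
  · rintro ⟨a, b⟩ _ ⟨c, d⟩ _ h
    simp only [Prod.mk.injEq] at h
    obtain ⟨h1, h2⟩ := h
    have := Fin.rev_injective h1
    have := Fin.rev_injective h2
    simp_all [Prod.ext_iff]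
  · rintro ⟨a, b⟩ hp
    refine ⟨(b.rev, a.rev), ?_, by simp⟩
    simp only [Finset.mem_filter, Finset.mem_univ, true_and] at hp ⊢
    obtain ⟨hab, hv⟩ := hp
    refine ⟨Fin.rev_lt_rev.mpr hab, ?_⟩
    simp only [rcPerm_apply, Fin.rev_rev]
    exact Fin.rev_lt_rev.mpr hv

lemma cycNum_rc {n : ℕ} (π : Equiv.Perm (Fin n)) : cycNum (rcPerm π) = cycNum π := by
  unfold cycNum
  congr 1
  · rw [rcPerm_eq_conj]
    rw [Equiv.Perm.cycleType_conj]
  · apply Finset.card_bij (fun i _ => i.rev)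
    · intro a ha
      simp only [Finset.mem_filter, Finset.mem_univ, true_and] at ha ⊢
      have h2 : (π a.rev).rev = a := ha
      show π a.rev = a.rev
      simpa using congrArg Fin.rev h2
    · intro a _ b _ h
      exact Fin.rev_injective h
    · intro b hb
      refine ⟨b.rev, ?_, by simp⟩
      simp only [Finset.mem_filter, Finset.mem_univ, true_and] at hb ⊢
      show (π b.rev.rev).rev = b.rev
      rw [Fin.rev_rev, hb]

theorem stmt3 (n : ℕ) (π : Equiv.Perm (Fin n)) (h : IsShallow π) :
    IsShallow (rcPerm π) := by
  unfold IsShallow reflLen at h ⊢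
  rw [dispD_rc, invNum_rc, cycNum_rc]
  exact h
end

section
/- For n ≥ 2, let π ∈ S_{n-2} and define τ ∈ S_n by τ(1) = n, τ(i) = π(i-1) + 1 for 2 ≤ i ≤ n-1, and τ(n) = 1. Then π is shallow if and only if τ is shallow. -/
open Equiv Finset

/-!
Write `τ = (1 n) · π'`, where `π'` is `π` shifted into the positions `2, …, n - 1 = m + 1`. The
transposition is disjoint from `π'`, so it adds one cycle on two new points and `T` grows by one.
The outer entries are inverted with each other and with every middle entry, giving `2m + 1` new
inversions, and each is displaced by `m + 1`. Both sides of `I + T = D` therefore grow by `2m + 2`.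
-/

lemma sum_univ_fin_add_two {M : Type*} [AddCommMonoid M] {m : ℕ} (f : Fin (m + 2) → M) :
    ∑ j, f j = f 0 + ∑ i : Fin m, f i.castSucc.succ + f (Fin.last (m + 1)) := by
  rw [Fin.sum_univ_succ, Fin.sum_univ_castSucc, ← add_assoc]
  rfl

lemma invNum_eq_sum {n : ℕ} (σ : Perm (Fin n)) :
    invNum σ = ∑ a, ∑ b, if a < b ∧ σ b < σ a then 1 else 0 := by
  rw [invNum, Finset.card_filter, Fintype.sum_prod_type]

lemma card_cycleType_le_card_support {α : Type*} [Fintype α] [DecidableEq α] (σ : Perm α) :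
    σ.cycleType.card ≤ #σ.support := by
  have := Multiset.card_nsmul_le_sum (s := σ.cycleType) (a := 1)
    fun _ h => (Perm.one_lt_of_mem_cycleType h).le
  simpa [Perm.sum_cycleType] using this

lemma reflLen_eq_card_support_sub {n : ℕ} (σ : Perm (Fin n)) :
    reflLen σ = #σ.support - σ.cycleType.card := by
  have hfix : #(univ.filter fun i => σ i = i) + #σ.support = n := by
    simpa [Perm.support] using
      Finset.card_filter_add_card_filter_not (s := (univ : Finset (Fin n))) (fun i => σ i = i)
  have := card_cycleType_le_card_support σ
  unfold reflLen cycNum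
  omega

def midEmb (m : ℕ) : Fin m ↪ Fin (m + 2) := Fin.castSuccEmb.trans (Fin.succEmb _)

def wrapPerm {m : ℕ} (π : Perm (Fin m)) : Perm (Fin (m + 2)) :=
  swap 0 (Fin.last (m + 1)) * π.viaFintypeEmbedding (midEmb m)

section wrapPerm

variable {m : ℕ} (π : Perm (Fin m))

@[simp] lemma midEmb_apply (i : Fin m) : midEmb m i = i.castSucc.succ := rfl

lemma zero_notMem_range_midEmb : (0 : Fin (m + 2)) ∉ Set.range (midEmb m) := by
  rintro ⟨i, hi⟩
  exact Fin.succ_ne_zero _ hi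

lemma last_notMem_range_midEmb : Fin.last (m + 1) ∉ Set.range (midEmb m) := by
  rintro ⟨i, hi⟩
  exact (Fin.castSucc_lt_last i).ne (Fin.succ_injective _ hi)

lemma viaFintypeEmbedding_midEmb_apply_zero : π.viaFintypeEmbedding (midEmb m) 0 = 0 :=
  π.viaFintypeEmbedding_apply_notMem_range (f := midEmb m) zero_notMem_range_midEmb

lemma viaFintypeEmbedding_midEmb_apply_last :
    π.viaFintypeEmbedding (midEmb m) (Fin.last (m + 1)) = Fin.last (m + 1) :=
  π.viaFintypeEmbedding_apply_notMem_range (f := midEmb m) last_notMem_range_midEmb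

@[simp] lemma wrapPerm_apply_zero : wrapPerm π 0 = Fin.last (m + 1) := by
  simp [wrapPerm, viaFintypeEmbedding_midEmb_apply_zero]

@[simp] lemma wrapPerm_apply_last : wrapPerm π (Fin.last (m + 1)) = 0 := by
  simp [wrapPerm, viaFintypeEmbedding_midEmb_apply_last]

@[simp] lemma wrapPerm_apply_castSucc_succ (i : Fin m) :
    wrapPerm π i.castSucc.succ = (π i).castSucc.succ := by
  have := π.viaFintypeEmbedding_apply_image (midEmb m) i
  rw [midEmb_apply, midEmb_apply] at this
  rw [wrapPerm, Perm.mul_apply, this, swap_apply_of_ne_of_ne (Fin.succ_ne_zero _)]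
  exact fun h => (Fin.castSucc_lt_last _).ne (Fin.succ_injective _ h)

lemma reflLen_wrapPerm : reflLen (wrapPerm π) = reflLen π + 1 := by
  have hne : (0 : Fin (m + 2)) ≠ Fin.last (m + 1) := Fin.last_pos.ne
  have hdisj : (swap 0 (Fin.last (m + 1))).Disjoint (π.viaFintypeEmbedding (midEmb m)) := by
    intro j
    by_cases hj : j = 0 ∨ j = Fin.last (m + 1)
    · right
      rcases hj with rfl | rfl
      exacts [viaFintypeEmbedding_midEmb_apply_zero π, viaFintypeEmbedding_midEmb_apply_last π]
    · push Not at hj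
      exact Or.inl (swap_apply_of_ne_of_ne hj.1 hj.2)
  have := card_cycleType_le_card_support π
  rw [reflLen_eq_card_support_sub, reflLen_eq_card_support_sub, wrapPerm, hdisj.card_support_mul,
    hdisj.cycleType_mul, Perm.card_support_swap hne, (Perm.isCycle_swap hne).cycleType]
  simp [Perm.viaFintypeEmbedding]
  omega

lemma dispD_wrapPerm : dispD (wrapPerm π) = dispD π + (2 * m + 2) := by
  rw [dispD, sum_univ_fin_add_two, dispD]
  simp only [wrapPerm_apply_zero, wrapPerm_apply_last, wrapPerm_apply_castSucc_succ, Fin.val_succ,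
    Fin.val_castSucc, Fin.val_last, Fin.val_zero]
  push_cast
  simp only [add_sub_add_right_eq_sub]
  omega

lemma sum_inv_wrapPerm_zero :
    (∑ b, if 0 < b ∧ wrapPerm π b < wrapPerm π 0 then 1 else 0) = m + 1 := by
  have hlt (i : Fin (m + 1)) : wrapPerm π i.succ < Fin.last (m + 1) := by
    rw [Fin.lt_last_iff_ne_last, ← wrapPerm_apply_zero π, (wrapPerm π).injective.ne_iff]
    exact Fin.succ_ne_zero i
  rw [Fin.sum_univ_succ]
  simp [Fin.succ_pos, hlt]

lemma sum_inv_wrapPerm_castSucc_succ (a : Fin m) :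
    (∑ b, if a.castSucc.succ < b ∧ wrapPerm π b < wrapPerm π a.castSucc.succ then 1 else 0) =
      (∑ b, if a < b ∧ π b < π a then 1 else 0) + 1 := by
  rw [sum_univ_fin_add_two]
  simp [Fin.succ_pos]

lemma sum_inv_wrapPerm_last :
    (∑ b, if Fin.last (m + 1) < b ∧ wrapPerm π b < wrapPerm π (Fin.last (m + 1)) then 1 else 0) =
      0 := by
  simp

lemma invNum_wrapPerm : invNum (wrapPerm π) = invNum π + (2 * m + 1) := by
  rw [invNum_eq_sum, sum_univ_fin_add_two, sum_inv_wrapPerm_zero, sum_inv_wrapPerm_last]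
  simp only [sum_inv_wrapPerm_castSucc_succ, Finset.sum_add_distrib, ← invNum_eq_sum, sum_const,
    card_univ, Fintype.card_fin, smul_eq_mul, mul_one, add_zero]
  ring

theorem isShallow_wrapPerm_iff : IsShallow (wrapPerm π) ↔ IsShallow π := by
  rw [IsShallow, IsShallow, dispD_wrapPerm, invNum_wrapPerm, reflLen_wrapPerm]
  omega

end wrapPerm

theorem eq_wrapPerm {m : ℕ} {π : Perm (Fin m)} {τ : Perm (Fin (m + 2))}
    (h0 : τ 0 = Fin.last (m + 1)) (hmid : ∀ i : Fin m, τ i.castSucc.succ = (π i).castSucc.succ)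
    (hlast : τ (Fin.last (m + 1)) = 0) : τ = wrapPerm π := by
  ext j : 1
  induction j using Fin.cases with
  | zero => simp [h0]
  | succ k =>
    induction k using Fin.lastCases with
    | last => simp [hlast]
    | cast i => simp [hmid]

theorem stmt11 (m : ℕ) (π : Equiv.Perm (Fin m)) (τ : Equiv.Perm (Fin (m + 2)))
    (h0 : τ 0 = Fin.last (m + 1))
    (hmid : ∀ i : Fin m, τ i.castSucc.succ = (π i).castSucc.succ)
    (hlast : τ (Fin.last (m + 1)) = 0) :
    IsShallow π ↔ IsShallow τ := by
  rw [eq_wrapPerm h0 hmid hlast, isShallow_wrapPerm_iff]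
end

section
/- For n ≥ 1, the number of 231-avoiding involutions of length n is 2^{n-1}, and every 231-avoiding involution is shallow (hence the number of shallow 231-avoiding involutions of length n is 2^{n-1}). -/
open Equiv Finset

def Avoids321 {n : ℕ} (π : Equiv.Perm (Fin n)) : Prop :=
  ¬ ∃ i j k : Fin n, i < j ∧ j < k ∧ π k < π j ∧ π j < π i

def Avoids132 {n : ℕ} (π : Equiv.Perm (Fin n)) : Prop :=
  ¬ ∃ i j k : Fin n, i < j ∧ j < k ∧ π i < π k ∧ π k < π j

def Avoids231 {n : ℕ} (π : Equiv.Perm (Fin n)) : Prop :=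
  ¬ ∃ i j k : Fin n, i < j ∧ j < k ∧ π k < π i ∧ π i < π j

namespace S17

variable {n : ℕ}

/-- block-start (largest cut ≤ i) -/
def lb (C : Finset ℕ) (i : ℕ) : ℕ := Nat.findGreatest (· ∈ C) i

/-- block-end-plus-one (smallest cut > i) -/
noncomputable def eb (C : Finset ℕ) (i : ℕ) : ℕ := sInf {b | i < b ∧ b ∈ C}

variable {C : Finset ℕ}

lemma lb_le (i : ℕ) : lb C i ≤ i := Nat.findGreatest_le i

lemma lb_mem (h0 : 0 ∈ C) (i : ℕ) : lb C i ∈ C :=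
  Nat.findGreatest_spec (Nat.zero_le i) h0

lemma le_lb {b i : ℕ} (hb : b ≤ i) (hmem : b ∈ C) : b ≤ lb C i :=
  Nat.le_findGreatest hb hmem

lemma eb_nonempty (hn : n ∈ C) {i : ℕ} (hi : i < n) : {b | i < b ∧ b ∈ C}.Nonempty :=
  ⟨n, hi, hn⟩

lemma lt_eb (hn : n ∈ C) {i : ℕ} (hi : i < n) : i < eb C i :=
  (Nat.sInf_mem (eb_nonempty hn hi)).1

lemma eb_mem (hn : n ∈ C) {i : ℕ} (hi : i < n) : eb C i ∈ C :=
  (Nat.sInf_mem (eb_nonempty hn hi)).2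

lemma eb_le {b i : ℕ} (hb : i < b) (hmem : b ∈ C) : eb C i ≤ b :=
  Nat.sInf_le ⟨hb, hmem⟩

lemma eb_le_n (hn : n ∈ C) {i : ℕ} (hi : i < n) : eb C i ≤ n := eb_le hi hn

/-- points in the same block have the same lb and eb -/
lemma run_eq (h0 : 0 ∈ C) (hn : n ∈ C) {i j : ℕ} (hi : i < n)
    (h1 : lb C i ≤ j) (h2 : j < eb C i) : lb C j = lb C i ∧ eb C j = eb C i := by
  have hlbi := lb_le (C := C) i
  have hebi := lt_eb hn hi
  constructor
  · refine le_antisymm ?_ (le_lb h1 (lb_mem h0 i))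
    by_contra hgt
    push_neg at hgt
    have hmem : lb C j ∈ C := lb_mem h0 j
    have hji : i < lb C j := by
      by_contra hle
      push_neg at hle
      exact absurd (le_lb hle hmem) (by omega)
    have := eb_le hji hmem
    have := lb_le (C := C) j
    omega
  · have hub : eb C j ≤ eb C i := eb_le (by omega) (eb_mem hn hi)
    refine le_antisymm hub ?_
    have hjn : j < n := by have := eb_le_n hn hi; omega
    have hmem : eb C j ∈ C := eb_mem hn hjn
    have hjj : j < eb C j := lt_eb hn hjn
    by_contra hlt
    push_neg at hlt
    have hle : eb C j ≤ i := by
      by_contra hh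
      push_neg at hh
      have := eb_le hh hmem
      omega
    have := le_lb hle hmem
    omega

/-- value of the model permutation -/
noncomputable def gv (C : Finset ℕ) (i : ℕ) : ℕ := lb C i + (eb C i - 1 - i)

lemma gv_lt (h0 : 0 ∈ C) (hn : n ∈ C) {i : ℕ} (hi : i < n) :
    lb C i ≤ gv C i ∧ gv C i < eb C i ∧ gv C i < n := by
  have h1 := lb_le (C := C) i
  have h2 := lt_eb hn hi
  have h3 := eb_le_n hn hi
  unfold gv; omega

lemma gv_run (h0 : 0 ∈ C) (hn : n ∈ C) {i : ℕ} (hi : i < n) :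
    lb C (gv C i) = lb C i ∧ eb C (gv C i) = eb C i := by
  obtain ⟨a, b, c⟩ := gv_lt h0 hn hi
  exact run_eq h0 hn hi a b

lemma gv_gv (h0 : 0 ∈ C) (hn : n ∈ C) {i : ℕ} (hi : i < n) : gv C (gv C i) = i := by
  obtain ⟨hr1, hr2⟩ := gv_run h0 hn hi
  have h1 := lb_le (C := C) i
  have h2 := lt_eb hn hi
  unfold gv at *
  omega


/-! ### permutations as ℕ-valued maps -/

def PV (π : Equiv.Perm (Fin n)) (m : ℕ) : ℕ :=
  if h : m < n then (π ⟨m, h⟩ : ℕ) else m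

lemma PV_lt (π : Equiv.Perm (Fin n)) {m : ℕ} (hm : m < n) : PV π m < n := by
  unfold PV; rw [dif_pos hm]; exact (π ⟨m, hm⟩).isLt

lemma PV_inj (π : Equiv.Perm (Fin n)) {a b : ℕ} (ha : a < n) (hb : b < n)
    (h : PV π a = PV π b) : a = b := by
  unfold PV at h
  rw [dif_pos ha, dif_pos hb] at h
  have := π.injective (Fin.ext h)
  exact congrArg Fin.val this

lemma PV_PV {π : Equiv.Perm (Fin n)} (h2 : π * π = 1) {m : ℕ} (hm : m < n) :
    PV π (PV π m) = m := by
  have h := Equiv.Perm.ext_iff.1 h2 ⟨m, hm⟩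
  simp only [Equiv.Perm.mul_apply, Equiv.Perm.one_apply] at h
  unfold PV
  rw [dif_pos hm, dif_pos (π ⟨m, hm⟩).isLt]
  conv_lhs => rw [show (⟨(π ⟨m, hm⟩ : ℕ), (π ⟨m, hm⟩).isLt⟩ : Fin n) = π ⟨m, hm⟩ from Fin.ext rfl]
  rw [h]

lemma avoids_iff (π : Equiv.Perm (Fin n)) :
    Avoids231 π ↔ ∀ a b c : ℕ, a < b → b < c → c < n →
      ¬(PV π c < PV π a ∧ PV π a < PV π b) := by
  constructor
  · rintro hA a b c hab hbc hc ⟨h1, h2⟩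
    have ha : a < n := by omega
    have hb : b < n := by omega
    apply hA
    refine ⟨⟨a, ha⟩, ⟨b, hb⟩, ⟨c, hc⟩, hab, hbc, ?_, ?_⟩ <;>
      · simp only [PV, dif_pos ha, dif_pos hb, dif_pos hc] at h1 h2
        simp only [Fin.lt_def]
        omega
  · rintro h ⟨i, j, k, hij, hjk, h1, h2⟩
    refine h i j k hij hjk k.isLt ⟨?_, ?_⟩ <;>
      · simp only [PV, dif_pos i.isLt, dif_pos j.isLt, dif_pos k.isLt, Fin.eta]
        simp only [Fin.lt_def] at h1 h2
        omega


/-! ### no ascents inside arcs -/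

lemma noAscent {π : Equiv.Perm (Fin n)} (hA : Avoids231 π) (h2 : π * π = 1)
    {i j : ℕ} (hi : i < n) (hlt : i < PV π i) (hij : i ≤ j) (hj : j + 1 ≤ PV π i) :
    PV π (j + 1) < PV π j := by
  rw [avoids_iff] at hA
  set M := PV π i with hM
  have hMn : M < n := PV_lt π hi
  have hPM : PV π M = i := PV_PV h2 hi
  -- subclaim S1
  have S1 : ∀ k, i < k → k < M → i < PV π k := by
    intro k hik hkM
    have hkn : k < n := by omega
    have hne : PV π k ≠ i := by
      intro h
      have hPPk : PV π (PV π k) = k := PV_PV h2 hkn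
      rw [h] at hPPk
      omega
    by_contra hle
    push_neg at hle
    have hpi : PV π k < i := by omega
    have hpn : PV π k < n := by omega
    have hPp : PV π (PV π k) = k := PV_PV h2 hkn
    exact hA (PV π k) i M hpi (by omega) hMn ⟨by omega, by omega⟩
  have hjn : j < n := by omega
  have hj1n : j + 1 ≤ n := by omega
  rcases lt_trichotomy (PV π (j+1)) (PV π j) with h | h | h
  · exact h
  · exact absurd (PV_inj π (by omega) hjn h) (by omega)
  · exfalso
    rcases Nat.eq_or_lt_of_le hij with he | hij'
    · -- j = i
      have hPj : PV π j = M := by rw [← he]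
      have hjM : j + 1 < M := by
        rcases Nat.eq_or_lt_of_le hj with he2 | hlt'
        · have hx : PV π (j+1) = i := by rw [he2, hPM]
          omega
        · exact hlt'
      exact hA j (j+1) M (by omega) hjM hMn ⟨by omega, by omega⟩
    · have hjM : j < M := by omega
      have hS := S1 j hij' hjM
      rcases Nat.eq_or_lt_of_le hj with he | hlt'
      · rw [← he] at hPM; omega
      · exact hA j (j+1) M (by omega) hlt' hMn ⟨by omega, by omega⟩

lemma noAscentArc {π : Equiv.Perm (Fin n)} (hA : Avoids231 π) (h2 : π * π = 1)
    {i j : ℕ} (hi : i < n) (hj1 : min i (PV π i) ≤ j) (hj2 : j + 1 ≤ max i (PV π i)) :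
    PV π (j + 1) < PV π j := by
  rcases lt_trichotomy i (PV π i) with h | h | h
  · exact noAscent hA h2 hi h (by omega) (by omega)
  · omega
  · have hPn : PV π i < n := by omega
    have hPP : PV π (PV π i) = i := PV_PV h2 hi
    refine noAscent hA h2 hPn (by omega) (by omega) (by omega)


/-! ### cuts and ascent sets -/

def cutsF (n : ℕ) (S : Finset (Fin (n-1))) : Finset ℕ :=
  insert 0 (insert n (S.image fun s => s.val + 1))

lemma mem_cutsF {S : Finset (Fin (n-1))} {b : ℕ} :
    b ∈ cutsF n S ↔ b = 0 ∨ b = n ∨ ∃ s ∈ S, (s : ℕ) + 1 = b := by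
  simp [cutsF]

lemma cutsF_zero (S : Finset (Fin (n-1))) : 0 ∈ cutsF n S := by simp [cutsF]

lemma cutsF_n (S : Finset (Fin (n-1))) : n ∈ cutsF n S := by simp [cutsF]

def Aset (π : Equiv.Perm (Fin n)) : Finset (Fin (n-1)) :=
  Finset.univ.filter fun s => PV π s < PV π ((s : ℕ) + 1)

lemma mem_Aset {π : Equiv.Perm (Fin n)} {s : Fin (n-1)} :
    s ∈ Aset π ↔ PV π s < PV π ((s : ℕ) + 1) := by
  simp [Aset]

lemma cutsA_ascent {π : Equiv.Perm (Fin n)} {j : ℕ} (hj : j + 1 < n)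
    (h : PV π j < PV π (j + 1)) : (j + 1) ∈ cutsF n (Aset π) := by
  rw [mem_cutsF]
  refine Or.inr (Or.inr ⟨⟨j, by omega⟩, ?_, rfl⟩)
  rw [mem_Aset]
  exact h

lemma ascent_of_cutsA {π : Equiv.Perm (Fin n)} {b : ℕ} (hb : b ∈ cutsF n (Aset π))
    (h0 : 0 < b) (hn : b < n) : PV π (b - 1) < PV π b := by
  rw [mem_cutsF] at hb
  rcases hb with rfl | rfl | ⟨s, hs, rfl⟩
  · omega
  · omega
  · rw [mem_Aset] at hs
    simpa using hs

/-- Classification: a 231-avoiding involution is given by gv on the cuts of its ascent set. -/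
lemma classify_val {π : Equiv.Perm (Fin n)} (hA : Avoids231 π) (h2 : π * π = 1)
    {i : ℕ} (hi : i < n) : PV π i = gv (cutsF n (Aset π)) i := by
  set C := cutsF n (Aset π) with hC
  have h0 : 0 ∈ C := cutsF_zero _
  have hnC : n ∈ C := cutsF_n _
  set l := lb C i with hl
  set E := eb C i with hE
  have hli : l ≤ i := lb_le i
  have hiE : i < E := lt_eb hnC hi
  have hEn : E ≤ n := eb_le_n hnC hi
  -- Step 1 : strictly decreasing inside the run
  have step1 : ∀ j, l ≤ j → j + 1 < E → PV π (j+1) < PV π j := by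
    intro j hlj hjE
    rcases lt_trichotomy (PV π (j+1)) (PV π j) with h | h | h
    · exact h
    · exact absurd (PV_inj π (by omega) (by omega) h.symm) (by omega)
    · exfalso
      have hcut : (j+1) ∈ C := cutsA_ascent (by omega) h
      rcases Nat.lt_or_ge i (j+1) with hgt | hle
      · have := eb_le hgt hcut
        omega
      · have := le_lb hle hcut
        omega
  -- Step 2 : each point's value stays within its own run
  have step2 : ∀ j, j < n → lb C j ≤ PV π j ∧ PV π j < eb C j := by
    intro j hjn
    have hPjn : PV π j < n := PV_lt π hjn
    set m := min j (PV π j) with hm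
    set M := max j (PV π j) with hM2
    have hnocut : ∀ b ∈ C, m < b → b ≤ M → False := by
      intro b hbC hmb hbM
      have hbn : b < n := by omega
      have hasc : PV π (b-1) < PV π b := ascent_of_cutsA hbC (by omega) hbn
      have := noAscentArc hA h2 hjn (show min j (PV π j) ≤ b - 1 by omega)
        (show (b-1) + 1 ≤ max j (PV π j) by omega)
      have hb1 : b - 1 + 1 = b := by omega
      rw [hb1] at this
      omega
    constructor
    · rcases le_or_gt j (PV π j) with hc | hc
      · have := lb_le (C := C) j; omega
      · -- PV j < j, m = PV j, M = j
        by_contra hgt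
        push_neg at hgt
        exact hnocut (lb C j) (lb_mem h0 j) (by omega) (by have := lb_le (C := C) j; omega)
    · rcases le_or_gt (PV π j) j with hc | hc
      · have := lt_eb hnC hjn; omega
      · by_contra hge
        push_neg at hge
        exact hnocut (eb C j) (eb_mem hnC hjn) (by have := lt_eb hnC hjn; omega) (by omega)
  -- run endpoints
  have hrun : ∀ j, l ≤ j → j < E → lb C j = l ∧ eb C j = E := fun j hj1 hj2 =>
    run_eq h0 hnC hi hj1 hj2
  have hvals : ∀ j, l ≤ j → j < E → l ≤ PV π j ∧ PV π j < E := by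
    intro j hj1 hj2
    obtain ⟨e1, e2⟩ := hrun j hj1 hj2
    obtain ⟨f1, f2⟩ := step2 j (by omega)
    omega
  -- Step 3 : the run is reversed
  have upper : ∀ d, l + d < E → PV π (l + d) + d ≤ PV π l := by
    intro d
    induction d with
    | zero => intro _; simp
    | succ k ih =>
      intro hk
      have h1 := step1 (l + k) (by omega) (by omega)
      have h2' := ih (by omega)
      have h3 : PV π (l + (k+1)) = PV π (l + k + 1) := rfl
      omega
  have lower : ∀ d, d < E - l → PV π (E - 1) + d ≤ PV π (E - 1 - d) := by
    intro d
    induction d with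
    | zero => simp
    | succ k ih =>
      intro hk
      have h1 := step1 (E - 1 - (k+1)) (by omega) (by omega)
      have h2' := ih (by omega)
      have he : E - 1 - (k+1) + 1 = E - 1 - k := by omega
      rw [he] at h1
      omega
  have hPl := hvals l (le_refl l) (by omega)
  have hPE := hvals (E-1) (by omega) (by omega)
  have hup := upper (i - l) (by omega)
  have hlow := lower (E - 1 - i) (by omega)
  have hre1 : l + (i - l) = i := by omega
  have hre2 : E - 1 - (E - 1 - i) = i := by omega
  rw [hre1] at hup
  rw [hre2] at hlow
  have : PV π i = l + (E - 1) - i := by omega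
  rw [this]
  unfold gv
  omega


/-! ### the model permutation -/

noncomputable def gPerm (n : ℕ) (S : Finset (Fin (n-1))) : Equiv.Perm (Fin n) where
  toFun i := ⟨gv (cutsF n S) i.val, (gv_lt (cutsF_zero S) (cutsF_n S) i.isLt).2.2⟩
  invFun i := ⟨gv (cutsF n S) i.val, (gv_lt (cutsF_zero S) (cutsF_n S) i.isLt).2.2⟩
  left_inv i := Fin.ext (gv_gv (cutsF_zero S) (cutsF_n S) i.isLt)
  right_inv i := Fin.ext (gv_gv (cutsF_zero S) (cutsF_n S) i.isLt)

lemma gPerm_val (S : Finset (Fin (n-1))) {i : Fin n} :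
    (gPerm n S i : ℕ) = gv (cutsF n S) i.val := rfl

lemma PV_gPerm (S : Finset (Fin (n-1))) {m : ℕ} (hm : m < n) :
    PV (gPerm n S) m = gv (cutsF n S) m := by
  unfold PV
  rw [dif_pos hm]
  rfl

lemma gPerm_invol (S : Finset (Fin (n-1))) : gPerm n S * gPerm n S = 1 := by
  apply Equiv.ext
  intro i
  simp only [Equiv.Perm.mul_apply, Equiv.Perm.one_apply]
  apply Fin.ext
  rw [gPerm_val S, gPerm_val S]
  exact gv_gv (cutsF_zero S) (cutsF_n S) i.isLt

lemma gPerm_avoids (S : Finset (Fin (n-1))) : Avoids231 (gPerm n S) := by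
  rw [avoids_iff]
  intro a b c hab hbc hcn ⟨h1, h2⟩
  set C := cutsF n S with hC
  have h0 : 0 ∈ C := cutsF_zero S
  have hnC : n ∈ C := cutsF_n S
  have han : a < n := by omega
  have hbn : b < n := by omega
  rw [PV_gPerm S hcn, PV_gPerm S han] at h1
  rw [PV_gPerm S han, PV_gPerm S hbn] at h2
  rw [← hC] at h1 h2
  -- from gv a < gv b and a < b : b is beyond a's run
  have hEa : eb C a ≤ b := by
    by_contra hh
    push_neg at hh
    obtain ⟨e1, e2⟩ := run_eq h0 hnC han (show lb C a ≤ b by have := lb_le (C := C) a; omega) hh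
    have h3 := lt_eb hnC han
    have h4 := lb_le (C := C) a
    unfold gv at h1 h2
    rw [e1, e2] at h2
    omega
  have hlc : eb C a ≤ lb C c := le_lb (by omega) (eb_mem hnC han)
  have hga : gv C a < eb C a := (gv_lt h0 hnC han).2.1
  have hgc : lb C c ≤ gv C c := (gv_lt h0 hnC hcn).1
  omega

lemma Aset_gPerm (S : Finset (Fin (n-1))) : Aset (gPerm n S) = S := by
  ext s
  rw [mem_Aset]
  set C := cutsF n S with hC
  have h0 : 0 ∈ C := cutsF_zero S
  have hnC : n ∈ C := cutsF_n S
  have hs1 : (s : ℕ) + 1 < n := by have := s.isLt; omega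
  have hsn : (s : ℕ) < n := by omega
  rw [PV_gPerm S hsn, PV_gPerm S hs1]
  rw [← hC]
  have hlbs := lb_le (C := C) (s : ℕ)
  have hebs := lt_eb hnC hsn
  constructor
  · intro hasc
    -- ascent implies s+1 is a cut
    by_contra hsS
    have hcut : ((s : ℕ) + 1) ∉ C := by
      rw [hC, mem_cutsF]
      push_neg
      refine ⟨by omega, by omega, ?_⟩
      intro t ht
      intro hteq
      have : t = s := Fin.ext (by omega)
      rw [this] at ht
      exact absurd ht hsS
    have hlt2 : (s : ℕ) + 1 < eb C s := by
      have h5 := lt_eb hnC hsn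
      rcases Nat.eq_or_lt_of_le (show (s:ℕ) + 1 ≤ eb C s by omega) with he | hlt
      · exact absurd (he ▸ eb_mem hnC hsn) hcut
      · exact hlt
    obtain ⟨e1, e2⟩ := run_eq h0 hnC hsn (show lb C s ≤ (s:ℕ)+1 by omega) hlt2
    unfold gv at hasc
    rw [e1, e2] at hasc
    omega
  · intro hsS
    have hcut : ((s : ℕ) + 1) ∈ C := by
      rw [hC, mem_cutsF]
      exact Or.inr (Or.inr ⟨s, hsS, rfl⟩)
    have hebeq : eb C s = (s : ℕ) + 1 := by
      have := eb_le (show (s:ℕ) < (s:ℕ)+1 by omega) hcut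
      omega
    have hlb1 : lb C ((s:ℕ)+1) = (s:ℕ)+1 := by
      have := le_lb (le_refl ((s:ℕ)+1)) hcut
      have := lb_le (C := C) ((s:ℕ)+1)
      omega
    have hg1 : gv C s ≤ (s : ℕ) := by unfold gv; omega
    have hg2 : (s:ℕ)+1 ≤ gv C ((s:ℕ)+1) := by unfold gv; rw [hlb1]; omega
    omega

/-- Classification, permutation form. -/
lemma classify {π : Equiv.Perm (Fin n)} (hA : Avoids231 π) (h2 : π * π = 1) :
    π = gPerm n (Aset π) := by
  apply Equiv.ext
  intro i
  apply Fin.ext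
  have h := classify_val hA h2 i.isLt
  unfold PV at h
  rw [dif_pos i.isLt] at h
  rw [Fin.eta] at h
  rw [gPerm_val]
  exact h


/-! ### statistics -/

lemma valFilter (p : ℕ → Prop) [DecidablePred p] :
    (Finset.univ.filter (fun j : Fin n => p j.val)).card = ((Finset.range n).filter p).card := by
  apply Finset.card_bij (fun j _ => j.val)
  · intro a ha
    rw [Finset.mem_filter] at ha ⊢
    exact ⟨Finset.mem_range.2 a.isLt, ha.2⟩
  · intro a _ b _ h
    exact Fin.ext h
  · intro m hm
    rw [Finset.mem_filter, Finset.mem_range] at hm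
    exact ⟨⟨m, hm.1⟩, Finset.mem_filter.2 ⟨Finset.mem_univ _, hm.2⟩, rfl⟩

lemma invNum_gPerm (S : Finset (Fin (n-1))) :
    invNum (gPerm n S) = ∑ m ∈ Finset.range n, (eb (cutsF n S) m - 1 - m) := by
  set C := cutsF n S with hC
  have h0 : 0 ∈ C := cutsF_zero S
  have hnC : n ∈ C := cutsF_n S
  unfold invNum
  rw [Finset.card_filter, Fintype.sum_prod_type]
  rw [← Fin.sum_univ_eq_sum_range (fun m => eb C m - 1 - m)]
  apply Finset.sum_congr rfl
  intro i _
  have hin : (i : ℕ) < n := i.isLt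
  -- inversion pairs of i are exactly the later elements of its run
  have key : ∀ j : Fin n, (i < j ∧ gPerm n S j < gPerm n S i) ↔ ((i:ℕ) < j.val ∧ j.val < eb C i) := by
    intro j
    have hjn : (j : ℕ) < n := j.isLt
    constructor
    · rintro ⟨hij, hlt⟩
      refine ⟨hij, ?_⟩
      by_contra hge
      push_neg at hge
      have hmem : eb C i ∈ C := eb_mem hnC hin
      have hlbj : eb C i ≤ lb C j := le_lb hge hmem
      have h1 : gv C i < eb C i := (gv_lt h0 hnC hin).2.1
      have h2 : lb C j ≤ gv C j := (gv_lt h0 hnC hjn).1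
      have hv : (gPerm n S j : ℕ) < (gPerm n S i : ℕ) := hlt
      rw [gPerm_val S, gPerm_val S, ← hC] at hv
      omega
    · rintro ⟨hij, hje⟩
      obtain ⟨e1, e2⟩ := run_eq h0 hnC hin (show lb C i ≤ (j:ℕ) by have := lb_le (C := C) (i:ℕ); omega) hje
      refine ⟨hij, ?_⟩
      show (gPerm n S j : ℕ) < (gPerm n S i : ℕ)
      rw [gPerm_val S, gPerm_val S, ← hC]
      unfold gv
      rw [e1, e2]
      have := lt_eb hnC hin
      have := lb_le (C := C) (i : ℕ)
      omega
  calc (∑ j : Fin n, if i < j ∧ gPerm n S j < gPerm n S i then 1 else 0)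
      = ∑ j : Fin n, if (i:ℕ) < j.val ∧ j.val < eb C i then 1 else 0 := by
        apply Finset.sum_congr rfl
        intro j _
        rw [if_congr (key j) rfl rfl]
    _ = (Finset.univ.filter (fun j : Fin n => (i:ℕ) < j.val ∧ j.val < eb C i)).card := by
        rw [Finset.card_filter]
    _ = ((Finset.range n).filter (fun m => (i:ℕ) < m ∧ m < eb C i)).card :=
        valFilter (fun m => (i:ℕ) < m ∧ m < eb C i)
    _ = (Finset.Ioo (i:ℕ) (eb C i)).card := by
        congr 1
        ext m
        simp only [Finset.mem_filter, Finset.mem_range, Finset.mem_Ioo]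
        have := eb_le_n hnC hin
        omega
    _ = eb C i - 1 - (i:ℕ) := by rw [Nat.card_Ioo]; omega

lemma dispD_gPerm (S : Finset (Fin (n-1))) :
    dispD (gPerm n S) = ∑ m ∈ Finset.range n, ((gv (cutsF n S) m : ℤ) - m).natAbs := by
  unfold dispD
  rw [← Fin.sum_univ_eq_sum_range (fun m => ((gv (cutsF n S) m : ℤ) - m).natAbs)]
  apply Finset.sum_congr rfl
  intro i _
  congr 2

lemma fixed_gPerm (S : Finset (Fin (n-1))) :
    (Finset.univ.filter (fun i : Fin n => gPerm n S i = i)).card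
      = ((Finset.range n).filter (fun m => gv (cutsF n S) m = m)).card := by
  have he : (Finset.univ.filter (fun i : Fin n => gPerm n S i = i))
      = Finset.univ.filter (fun i : Fin n => gv (cutsF n S) i.val = i.val) := by
    apply Finset.filter_congr
    intro i _
    constructor
    · intro h
      rw [← gPerm_val S, h]
    · intro h
      exact Fin.ext (by rw [gPerm_val S, h])
  rw [he]
  exact valFilter (fun m => gv (cutsF n S) m = m)

lemma support_gPerm (S : Finset (Fin (n-1))) :
    (gPerm n S).support.card
      = ((Finset.range n).filter (fun m => ¬ gv (cutsF n S) m = m)).card := by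
  have : (gPerm n S).support = Finset.univ.filter (fun i : Fin n => ¬ gv (cutsF n S) i.val = i.val) := by
    ext i
    rw [Equiv.Perm.mem_support, Finset.mem_filter]
    constructor
    · intro h
      refine ⟨Finset.mem_univ _, fun he => h (Fin.ext (by rw [gPerm_val S, he]))⟩
    · rintro ⟨-, h⟩
      intro he
      exact h (by rw [← gPerm_val S, he])
  rw [this]
  exact valFilter (fun m => ¬ gv (cutsF n S) m = m)


/-! ### the per-block numeric identity -/

lemma peel (f : ℕ → ℕ) (m : ℕ) :
    ∑ t ∈ Finset.range (m + 2), f t = ((∑ t ∈ Finset.range m, f (t + 1)) + f 0) + f (m + 1) := by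
  rw [Finset.sum_range_succ, Finset.sum_range_succ']

lemma core : ∀ M : ℕ, ∑ t ∈ Finset.range M, 2 * (((M : ℤ) - 1 - 2 * (t : ℕ)).natAbs)
    = ∑ t ∈ Finset.range M, (2 * (M - 1 - t) + if M = 2 * t + 1 then 0 else 1)
  | 0 => by simp
  | 1 => by norm_num
  | (m + 2) => by
    have IH := core m
    rw [peel (fun t => 2 * ((((m + 2 : ℕ) : ℤ) - 1 - 2 * (t : ℕ)).natAbs)) m,
      peel (fun t => 2 * (m + 2 - 1 - t) + if m + 2 = 2 * t + 1 then 0 else 1) m]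
    have hL : ∑ t ∈ Finset.range m, 2 * ((((m + 2 : ℕ) : ℤ) - 1 - 2 * ((t + 1 : ℕ) : ℕ)).natAbs)
        = ∑ t ∈ Finset.range m, 2 * (((m : ℤ) - 1 - 2 * (t : ℕ)).natAbs) := by
      apply Finset.sum_congr rfl
      intro t _
      congr 2
      push_cast
      ring
    have hR : ∑ t ∈ Finset.range m,
          (2 * (m + 2 - 1 - (t + 1)) + if m + 2 = 2 * (t + 1) + 1 then 0 else 1)
        = (∑ t ∈ Finset.range m, (2 * (m - 1 - t) + if m = 2 * t + 1 then 0 else 1)) + 2 * m := by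
      have hc : ∀ t ∈ Finset.range m,
          (2 * (m + 2 - 1 - (t + 1)) + if m + 2 = 2 * (t + 1) + 1 then 0 else 1)
            = (2 * (m - 1 - t) + if m = 2 * t + 1 then 0 else 1) + 2 := by
        intro t ht
        rw [Finset.mem_range] at ht
        have hiff : (m + 2 = 2 * (t + 1) + 1) ↔ (m = 2 * t + 1) := by omega
        rw [if_congr hiff rfl rfl]
        have harith : m + 2 - 1 - (t + 1) = (m - 1 - t) + 1 := by omega
        rw [harith]
        ring
      rw [Finset.sum_congr rfl hc, Finset.sum_add_distrib, Finset.sum_const,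
        Finset.card_range, smul_eq_mul]
      ring
    rw [hL, hR, IH]
    have e1 : (((m + 2 : ℕ) : ℤ) - 1 - 2 * ((0 : ℕ) : ℕ)).natAbs = m + 1 := by
      rw [show (((m + 2 : ℕ) : ℤ) - 1 - 2 * ((0 : ℕ) : ℕ)) = ((m + 1 : ℕ) : ℤ) by push_cast; ring]
      exact Int.natAbs_natCast _
    have e2 : (((m + 2 : ℕ) : ℤ) - 1 - 2 * ((m + 1 : ℕ) : ℕ)).natAbs = m + 1 := by
      rw [show (((m + 2 : ℕ) : ℤ) - 1 - 2 * ((m + 1 : ℕ) : ℕ)) = -((m + 1 : ℕ) : ℤ) by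
        push_cast; ring]
      rw [Int.natAbs_neg]
      exact Int.natAbs_natCast _
    rw [e1, e2, if_neg (by omega : ¬ m + 2 = 2 * 0 + 1),
      if_neg (by omega : ¬ m + 2 = 2 * (m + 1) + 1)]
    omega


/-! ### fiberwise identity -/

lemma sum_identity (S : Finset (Fin (n-1))) :
    ∑ m ∈ Finset.range n, 2 * ((gv (cutsF n S) m : ℤ) - m).natAbs
      = ∑ m ∈ Finset.range n,
          (2 * (eb (cutsF n S) m - 1 - m) + if gv (cutsF n S) m = m then 0 else 1) := by
  set C := cutsF n S with hC
  have h0 : 0 ∈ C := cutsF_zero S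
  have hnC : n ∈ C := cutsF_n S
  have hmap : ∀ m ∈ Finset.range n, lb C m ∈ (Finset.range n).image (lb C) :=
    fun m hm => Finset.mem_image_of_mem _ hm
  rw [← Finset.sum_fiberwise_of_maps_to hmap
      (fun m => 2 * ((gv C m : ℤ) - m).natAbs),
    ← Finset.sum_fiberwise_of_maps_to hmap
      (fun m => 2 * (eb C m - 1 - m) + if gv C m = m then 0 else 1)]
  apply Finset.sum_congr rfl
  intro b hb
  obtain ⟨m0, hm0, hbm0⟩ := Finset.mem_image.1 hb
  rw [Finset.mem_range] at hm0
  have hbC : b ∈ C := hbm0 ▸ lb_mem h0 m0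
  have hbn : b < n := by have := lb_le (C := C) m0; omega
  have hlbb : lb C b = b := by
    have := le_lb (le_refl b) hbC
    have := lb_le (C := C) b
    omega
  have hbE : b < eb C b := lt_eb hnC hbn
  have hEn : eb C b ≤ n := eb_le_n hnC hbn
  have hfib : (Finset.range n).filter (fun m => lb C m = b) = Finset.Ico b (eb C b) := by
    ext m
    simp only [Finset.mem_filter, Finset.mem_range, Finset.mem_Ico]
    constructor
    · rintro ⟨hmn, heq⟩
      have h1 : lb C m ≤ m := lb_le m
      obtain ⟨e1, e2⟩ := run_eq h0 hnC hmn (show lb C m ≤ b by omega)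
        (show b < eb C m by have := lt_eb hnC hmn; omega)
      have := lt_eb hnC hmn
      omega
    · rintro ⟨hbm, hme⟩
      have hmn : m < n := by omega
      obtain ⟨e1, e2⟩ := run_eq h0 hnC hbn (show lb C b ≤ m by omega) (by omega)
      refine ⟨hmn, ?_⟩
      rw [e1, hlbb]
  rw [hfib, Finset.sum_Ico_eq_sum_range, Finset.sum_Ico_eq_sum_range]
  set E := eb C b with hE
  set M := E - b with hM
  have hrun : ∀ t, t < M → lb C (b + t) = b ∧ eb C (b + t) = E := by
    intro t ht
    have := run_eq h0 hnC hbn (show lb C b ≤ b + t by omega) (show b + t < eb C b by omega)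
    rw [hlbb] at this
    exact this
  calc ∑ t ∈ Finset.range M, 2 * ((gv C (b + t) : ℤ) - (b + t)).natAbs
      = ∑ t ∈ Finset.range M, 2 * (((M : ℤ) - 1 - 2 * (t : ℕ)).natAbs) := by
        apply Finset.sum_congr rfl
        intro t ht
        rw [Finset.mem_range] at ht
        obtain ⟨e1, e2⟩ := hrun t ht
        have hgv : gv C (b + t) = b + (E - 1 - (b + t)) := by
          unfold gv
          rw [e1, e2]
        rw [hgv]
        congr 1
        apply congrArg Int.natAbs
        omega
    _ = ∑ t ∈ Finset.range M, (2 * (M - 1 - t) + if M = 2 * t + 1 then 0 else 1) := core M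
    _ = ∑ t ∈ Finset.range M,
          (2 * (eb C (b + t) - 1 - (b + t)) + if gv C (b + t) = b + t then 0 else 1) := by
        apply Finset.sum_congr rfl
        intro t ht
        rw [Finset.mem_range] at ht
        obtain ⟨e1, e2⟩ := hrun t ht
        have hgv : gv C (b + t) = b + (E - 1 - (b + t)) := by
          unfold gv
          rw [e1, e2]
        rw [hgv, e2]
        have h1 : M - 1 - t = E - 1 - (b + t) := by omega
        have h2 : (M = 2 * t + 1) ↔ (b + (E - 1 - (b + t)) = b + t) := by omega
        rw [h1, if_congr h2 rfl rfl]

/-! ### reflection length of involutions -/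

lemma support_card_invol {π : Equiv.Perm (Fin n)} (h2 : π * π = 1) :
    π.support.card = 2 * π.cycleType.card := by
  have hq : ∀ q ∈ π.cycleType, q = 2 := by
    intro q hq
    have h2le := Equiv.Perm.two_le_of_mem_cycleType hq
    have hdvd : q ∣ orderOf π := (Equiv.Perm.lcm_cycleType π) ▸ Multiset.dvd_lcm hq
    have hord : orderOf π ∣ 2 := orderOf_dvd_of_pow_eq_one (by rw [pow_two]; exact h2)
    have hq2 : q ∣ 2 := hdvd.trans hord
    have := Nat.le_of_dvd (by norm_num) hq2
    omega
  have hsum := Equiv.Perm.sum_cycleType π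
  have hrep : π.cycleType = Multiset.replicate (Multiset.card π.cycleType) 2 :=
    Multiset.eq_replicate.2 ⟨rfl, hq⟩
  rw [← hsum]
  conv_lhs => rw [hrep]
  rw [Multiset.sum_replicate, smul_eq_mul, mul_comm]

lemma reflLen_invol {π : Equiv.Perm (Fin n)} (h2 : π * π = 1) :
    reflLen π = π.support.card / 2 := by
  have hsup : π.support.card = 2 * π.cycleType.card := support_card_invol h2
  have hfix : (Finset.univ.filter fun i : Fin n => π i = i).card = n - π.support.card := by
    have hadd := Finset.card_filter_add_card_filter_not
      (s := (Finset.univ : Finset (Fin n))) (p := fun i => π i = i)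
    have hsupp : π.support = Finset.univ.filter (fun i : Fin n => ¬ π i = i) := rfl
    rw [← hsupp] at hadd
    rw [Finset.card_univ, Fintype.card_fin] at hadd
    omega
  have hle : π.support.card ≤ n := by
    have := Finset.card_le_univ π.support
    simpa using this
  unfold reflLen cycNum
  omega

lemma isShallow_gPerm (S : Finset (Fin (n-1))) : IsShallow (gPerm n S) := by
  unfold IsShallow
  rw [reflLen_invol (gPerm_invol S), support_gPerm, invNum_gPerm, dispD_gPerm]
  have hid := sum_identity S
  have hsupsum : ((Finset.range n).filter fun m => ¬ gv (cutsF n S) m = m).card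
      = ∑ m ∈ Finset.range n, (if gv (cutsF n S) m = m then 0 else 1) := by
    rw [Finset.card_filter]
    apply Finset.sum_congr rfl
    intro m _
    by_cases h : gv (cutsF n S) m = m <;> simp [h]
  have hsup2 : (gPerm n S).support.card = 2 * (gPerm n S).cycleType.card :=
    support_card_invol (gPerm_invol S)
  rw [support_gPerm] at hsup2
  rw [hsupsum] at hsup2 ⊢
  have hsplit : ∑ m ∈ Finset.range n,
        (2 * (eb (cutsF n S) m - 1 - m) + if gv (cutsF n S) m = m then 0 else 1)
      = 2 * (∑ m ∈ Finset.range n, (eb (cutsF n S) m - 1 - m))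
        + ∑ m ∈ Finset.range n, (if gv (cutsF n S) m = m then 0 else 1) := by
    rw [Finset.sum_add_distrib, Finset.mul_sum]
  have h2d : ∑ m ∈ Finset.range n, 2 * ((gv (cutsF n S) m : ℤ) - m).natAbs
      = 2 * ∑ m ∈ Finset.range n, ((gv (cutsF n S) m : ℤ) - m).natAbs := by
    rw [Finset.mul_sum]
  rw [hsplit, h2d] at hid
  omega


noncomputable def theEquiv (n : ℕ) :
    {π : Equiv.Perm (Fin n) // Avoids231 π ∧ π * π = 1} ≃ Finset (Fin (n-1)) where
  toFun p := Aset p.1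
  invFun S := ⟨gPerm n S, gPerm_avoids S, gPerm_invol S⟩
  left_inv p := Subtype.ext (classify p.2.1 p.2.2).symm
  right_inv S := Aset_gPerm S

end S17

theorem stmt17 (n : ℕ) (hn : 1 ≤ n) :
    Nat.card {π : Equiv.Perm (Fin n) // Avoids231 π ∧ π * π = 1} = 2 ^ (n - 1) ∧
      (∀ π : Equiv.Perm (Fin n), Avoids231 π → π * π = 1 → IsShallow π) := by
  constructor
  · rw [Nat.card_congr (S17.theEquiv n), Nat.card_eq_fintype_card, Fintype.card_finset,
      Fintype.card_fin]
  · intro π h1 h2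
    rw [S17.classify h1 h2]
    exact S17.isShallow_gPerm _
end

section
/- For n ≥ 3, if π ∈ S_n is a shallow 321-avoiding permutation with π(j) = n for some j with 1 ≤ j < n-1, then π(n) = n-1 and π(k) = k-1 for all k with j+2 ≤ k ≤ n. -/
open Equiv Finset

namespace Stmt19Aux

variable {n : ℕ}

/-- displacement summand -/
def dN (π : Equiv.Perm (Fin n)) (i : Fin n) : ℕ := ((π i : ℤ) - (i : ℤ)).natAbs

lemma dispD_eq (π : Equiv.Perm (Fin n)) : dispD π = ∑ i : Fin n, dN π i := rfl

/-- elements of S crossing the gap between g and g+1 (in either direction) -/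
def crossAt (π : Equiv.Perm (Fin n)) (S : Finset (Fin n)) (g : ℕ) : Finset (Fin n) :=
  S.filter (fun i : Fin n => ((i : ℕ) ≤ g ∧ g < (π i : ℕ)) ∨ ((π i : ℕ) ≤ g ∧ g < (i : ℕ)))

lemma card_filter_val_lt (v : ℕ) (hv : v ≤ n) :
    ((univ : Finset (Fin n)).filter (fun x : Fin n => (x : ℕ) < v)).card = v := by
  have h : ((univ : Finset (Fin n)).filter (fun x : Fin n => (x : ℕ) < v)).card
      = (Finset.range v).card := by
    apply Finset.card_bij' (fun (x : Fin n) _ => (x : ℕ))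
        (fun (g : ℕ) hg => (⟨g, lt_of_lt_of_le (Finset.mem_range.mp hg) hv⟩ : Fin n))
    case hi =>
      intro a ha
      rw [Finset.mem_filter] at ha
      exact Finset.mem_range.mpr ha.2
    case hj =>
      intro g hg
      rw [Finset.mem_filter]
      exact ⟨Finset.mem_univ _, Finset.mem_range.mp hg⟩
    case left_inv => intro a _; rfl
    case right_inv => intro g _; rfl
  rw [h, Finset.card_range]

lemma card_filter_comp (π : Equiv.Perm (Fin n)) (p : Fin n → Prop) [DecidablePred p] :
    ((univ : Finset (Fin n)).filter (fun x => p (π x))).card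
      = ((univ : Finset (Fin n)).filter p).card := by
  apply Finset.card_bij (fun x _ => π x)
  · intro a ha
    rw [Finset.mem_filter] at ha ⊢
    exact ⟨Finset.mem_univ _, ha.2⟩
  · intro a _ b _ h
    exact π.injective h
  · intro b hb
    rw [Finset.mem_filter] at hb
    exact ⟨π.symm b, Finset.mem_filter.mpr ⟨Finset.mem_univ _, by simpa using hb.2⟩, by simp⟩

lemma card_filter_val_gt (v : ℕ) (hv : v < n) :
    ((univ : Finset (Fin n)).filter (fun x : Fin n => v < (x : ℕ))).card = n - (v + 1) := by
  have h1 := card_filter_val_lt (n := n) (v + 1) hv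
  have h2 := Finset.card_filter_add_card_filter_not
      (s := (univ : Finset (Fin n))) (p := fun x : Fin n => (x : ℕ) < v + 1)
  have h3 : (univ : Finset (Fin n)).filter (fun x : Fin n => ¬ ((x : ℕ) < v + 1))
      = (univ : Finset (Fin n)).filter (fun x : Fin n => v < (x : ℕ)) :=
    Finset.filter_congr (fun x _ => by omega)
  rw [h3] at h2
  have h4 : (univ : Finset (Fin n)).card = n := by
    rw [Finset.card_univ, Fintype.card_fin]
  omega

lemma disp_sum (π : Equiv.Perm (Fin n)) (S : Finset (Fin n)) :
    ∑ i ∈ S, dN π i = ∑ g ∈ Finset.range n, (crossAt π S g).card := by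
  have hterm : ∀ i ∈ S, dN π i = ∑ g ∈ Finset.range n,
      (if ((i : ℕ) ≤ g ∧ g < (π i : ℕ)) ∨ ((π i : ℕ) ≤ g ∧ g < (i : ℕ)) then 1 else 0) := by
    intro i _
    rw [← Finset.card_filter]
    have hi := i.isLt
    have hpi := (π i).isLt
    rcases le_total (i : ℕ) ((π i : ℕ)) with h | h
    · have he : (Finset.range n).filter
          (fun g => ((i : ℕ) ≤ g ∧ g < (π i : ℕ)) ∨ ((π i : ℕ) ≤ g ∧ g < (i : ℕ)))
          = Finset.Ico (i : ℕ) ((π i : ℕ)) := by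
        ext g
        simp only [Finset.mem_filter, Finset.mem_range, Finset.mem_Ico]
        omega
      rw [he, Nat.card_Ico]
      unfold dN
      omega
    · have he : (Finset.range n).filter
          (fun g => ((i : ℕ) ≤ g ∧ g < (π i : ℕ)) ∨ ((π i : ℕ) ≤ g ∧ g < (i : ℕ)))
          = Finset.Ico ((π i : ℕ)) ((i : ℕ)) := by
        ext g
        simp only [Finset.mem_filter, Finset.mem_range, Finset.mem_Ico]
        omega
      rw [he, Nat.card_Ico]
      unfold dN
      omega
  rw [Finset.sum_congr rfl hterm, Finset.sum_comm]
  exact Finset.sum_congr rfl (fun g _ => (Finset.card_filter _ _).symm)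

lemma invariant_closed {C : Equiv.Perm (Fin n)} (hc : C.IsCycle) {A : Finset (Fin n)}
    (hsub : A ⊆ C.support) (hinv : ∀ i ∈ A, C i ∈ A) {a b : Fin n}
    (ha : a ∈ A) (hb : b ∈ C.support) : b ∈ A := by
  obtain ⟨i, hi⟩ := hc.exists_pow_eq (Perm.mem_support.mp (hsub ha)) (Perm.mem_support.mp hb)
  have key : ∀ m : ℕ, (C ^ m) a ∈ A := by
    intro m
    induction m with
    | zero => simpa using ha
    | succ m ih =>
      rw [pow_succ', Perm.mul_apply]
      exact hinv _ ih
  exact hi ▸ key i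

lemma cross_two (π : Equiv.Perm (Fin n)) {C : Equiv.Perm (Fin n)}
    (hC : C ∈ π.cycleFactorsFinset) (hne : C.support.Nonempty) {g : ℕ}
    (h1 : ((C.support.min' hne : Fin n) : ℕ) ≤ g)
    (h2 : g < ((C.support.max' hne : Fin n) : ℕ)) :
    2 ≤ (crossAt π C.support g).card := by
  obtain ⟨hcyc, hagree⟩ := Perm.mem_cycleFactorsFinset_iff.mp hC
  have hup : ∃ i ∈ C.support, (i : ℕ) ≤ g ∧ g < ((π i : Fin n) : ℕ) := by
    by_contra hno
    push_neg at hno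
    have hinv : ∀ i ∈ C.support.filter (fun x : Fin n => (x : ℕ) ≤ g),
        C i ∈ C.support.filter (fun x : Fin n => (x : ℕ) ≤ g) := by
      intro i hi
      rw [Finset.mem_filter] at hi ⊢
      have hCi : C i = π i := hagree i hi.1
      refine ⟨Perm.apply_mem_support.mpr hi.1, ?_⟩
      rw [hCi]
      exact hno i hi.1 hi.2
    have hmem := invariant_closed hcyc (Finset.filter_subset _ _) hinv
      (Finset.mem_filter.mpr ⟨C.support.min'_mem hne, h1⟩) (C.support.max'_mem hne)
    rw [Finset.mem_filter] at hmem
    omega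
  have hdown : ∃ i ∈ C.support, ((π i : Fin n) : ℕ) ≤ g ∧ g < (i : ℕ) := by
    by_contra hno
    push_neg at hno
    have hinv : ∀ i ∈ C.support.filter (fun x : Fin n => g < (x : ℕ)),
        C i ∈ C.support.filter (fun x : Fin n => g < (x : ℕ)) := by
      intro i hi
      rw [Finset.mem_filter] at hi ⊢
      have hCi : C i = π i := hagree i hi.1
      refine ⟨Perm.apply_mem_support.mpr hi.1, ?_⟩
      rw [hCi]
      by_contra hle
      have := hno i hi.1 (by omega)
      omega
    have hmem := invariant_closed hcyc (Finset.filter_subset _ _) hinv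
      (Finset.mem_filter.mpr ⟨C.support.max'_mem hne, h2⟩) (C.support.min'_mem hne)
    rw [Finset.mem_filter] at hmem
    omega
  obtain ⟨i, hiS, hi1, hi2⟩ := hup
  obtain ⟨i', hi'S, hi'1, hi'2⟩ := hdown
  have hne' : i ≠ i' := by
    intro h
    rw [h] at hi1 hi2
    omega
  have hsub : ({i, i'} : Finset (Fin n)) ⊆ crossAt π C.support g := by
    intro x hx
    rcases Finset.mem_insert.mp hx with h | h
    · subst h
      exact Finset.mem_filter.mpr ⟨hiS, Or.inl ⟨hi1, hi2⟩⟩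
    · rw [Finset.mem_singleton.mp h]
      exact Finset.mem_filter.mpr ⟨hi'S, Or.inr ⟨hi'1, hi'2⟩⟩
  calc 2 = ({i, i'} : Finset (Fin n)).card := (Finset.card_pair hne').symm
    _ ≤ _ := Finset.card_le_card hsub

lemma percycle_lower (π : Equiv.Perm (Fin n)) {c : Equiv.Perm (Fin n)}
    (hc : c ∈ π.cycleFactorsFinset) :
    2 * c.support.card ≤ (∑ i ∈ c.support, dN π i) + 2 := by
  have hcyc := (Perm.mem_cycleFactorsFinset_iff.mp hc).1
  have hne : c.support.Nonempty := Finset.card_pos.mp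
    (lt_of_lt_of_le (by norm_num) hcyc.two_le_card_support)
  have hab : (c.support.min' hne : ℕ) ≤ (c.support.max' hne : ℕ) :=
    c.support.min'_le _ (c.support.max'_mem hne)
  have hsub : c.support ⊆ Finset.Icc (c.support.min' hne) (c.support.max' hne) :=
    fun x hx => Finset.mem_Icc.mpr ⟨c.support.min'_le _ hx, c.support.le_max' _ hx⟩
  have hcard : c.support.card ≤ (c.support.max' hne : ℕ) + 1 - (c.support.min' hne : ℕ) :=
    (Finset.card_le_card hsub).trans_eq (Fin.card_Icc _ _)
  have hIco : Finset.Ico ((c.support.min' hne : Fin n) : ℕ) ((c.support.max' hne : Fin n) : ℕ)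
      ⊆ Finset.range n := by
    intro g hg
    rw [Finset.mem_Ico] at hg
    rw [Finset.mem_range]
    have := (c.support.max' hne).isLt
    omega
  have hcross : ∀ g ∈ Finset.Ico ((c.support.min' hne : Fin n) : ℕ)
      ((c.support.max' hne : Fin n) : ℕ), 2 ≤ (crossAt π c.support g).card := by
    intro g hg
    rw [Finset.mem_Ico] at hg
    exact cross_two π hc hne hg.1 hg.2
  have h1 : 2 * (((c.support.max' hne : Fin n) : ℕ) - ((c.support.min' hne : Fin n) : ℕ))
      ≤ ∑ g ∈ Finset.Ico ((c.support.min' hne : Fin n) : ℕ)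
        ((c.support.max' hne : Fin n) : ℕ), (crossAt π c.support g).card := by
    have := Finset.card_nsmul_le_sum _ _ _ hcross
    rwa [Nat.card_Ico, smul_eq_mul, mul_comm] at this
  have h2 : ∑ g ∈ Finset.Ico ((c.support.min' hne : Fin n) : ℕ)
      ((c.support.max' hne : Fin n) : ℕ), (crossAt π c.support g).card
      ≤ ∑ g ∈ Finset.range n, (crossAt π c.support g).card :=
    Finset.sum_le_sum_of_subset hIco
  rw [disp_sum]
  omega

lemma support_eq_biUnion (π : Equiv.Perm (Fin n)) :
    π.support = π.cycleFactorsFinset.biUnion Equiv.Perm.support := by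
  ext x
  rw [Finset.mem_biUnion]
  exact Perm.mem_support_iff_mem_support_of_mem_cycleFactorsFinset

lemma decomp (π : Equiv.Perm (Fin n)) :
    dispD π = ∑ c ∈ π.cycleFactorsFinset, ∑ i ∈ c.support, dN π i := by
  have h0 : dispD π = ∑ i ∈ π.support, dN π i := by
    rw [dispD_eq]
    refine (Finset.sum_subset (Finset.subset_univ _) ?_).symm
    intro x _ hx
    have : π x = x := Perm.notMem_support.mp hx
    unfold dN
    rw [this]
    simp
  have hdisj : (↑π.cycleFactorsFinset : Set (Equiv.Perm (Fin n))).PairwiseDisjoint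
      Equiv.Perm.support := fun c hc d hd hcd =>
    (π.cycleFactorsFinset_pairwise_disjoint hc hd hcd).disjoint_support
  rw [h0, support_eq_biUnion, Finset.sum_biUnion hdisj]

lemma sum_support_card (π : Equiv.Perm (Fin n)) :
    ∑ c ∈ π.cycleFactorsFinset, c.support.card = π.support.card := by
  have h1 := Equiv.Perm.sum_cycleType π
  rw [Equiv.Perm.cycleType_def] at h1
  rw [← h1]
  rfl

lemma refl_card (π : Equiv.Perm (Fin n)) :
    reflLen π + π.cycleFactorsFinset.card = π.support.card := by
  have h2 : π.cycleType.card = π.cycleFactorsFinset.card := by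
    rw [Equiv.Perm.cycleType_def, Multiset.card_map]
    rfl
  have h4 : (Finset.univ.filter (fun i => π i = i)).card = n - π.support.card := by
    have he : (Finset.univ.filter (fun i => π i = i)) = π.supportᶜ := by
      ext i
      simp [Equiv.Perm.mem_support]
    rw [he, Finset.card_compl, Fintype.card_fin]
  have h5 : π.support.card ≤ n := by
    have := Finset.card_le_univ π.support
    simpa using this
  have h6 : π.cycleFactorsFinset.card ≤ π.support.card := by
    rw [← sum_support_card]
    have : ∀ c ∈ π.cycleFactorsFinset, 1 ≤ c.support.card := by
      intro c hc
      have := (Perm.mem_cycleFactorsFinset_iff.mp hc).1.two_le_card_support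
      omega
    have := Finset.card_nsmul_le_sum _ _ _ this
    rwa [smul_eq_mul, mul_one] at this
  unfold reflLen cycNum
  omega

lemma percycle_upper (π : Equiv.Perm (Fin n)) (hs : IsShallow π)
    (hI : 2 * invNum π ≤ dispD π) {C : Equiv.Perm (Fin n)}
    (hC : C ∈ π.cycleFactorsFinset) :
    (∑ i ∈ C.support, dN π i) + 2 ≤ 2 * C.support.card := by
  have hdec := decomp π
  have hsc := sum_support_card π
  have hrc := refl_card π
  have hsplitD : (∑ i ∈ C.support, dN π i)
      + ∑ c ∈ π.cycleFactorsFinset.erase C, ∑ i ∈ c.support, dN π i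
      = ∑ c ∈ π.cycleFactorsFinset, ∑ i ∈ c.support, dN π i :=
    Finset.add_sum_erase _ (fun c => ∑ i ∈ c.support, dN π i) hC
  have hsplitC : C.support.card + ∑ c ∈ π.cycleFactorsFinset.erase C, c.support.card
      = ∑ c ∈ π.cycleFactorsFinset, c.support.card :=
    Finset.add_sum_erase _ (fun c => c.support.card) hC
  have hrest : ∀ c ∈ π.cycleFactorsFinset.erase C,
      2 * c.support.card ≤ (∑ i ∈ c.support, dN π i) + 2 :=
    fun c hc => percycle_lower π (Finset.mem_of_mem_erase hc)
  have hsum_rest : 2 * (∑ c ∈ π.cycleFactorsFinset.erase C, c.support.card)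
      ≤ (∑ c ∈ π.cycleFactorsFinset.erase C, ∑ i ∈ c.support, dN π i)
        + 2 * (π.cycleFactorsFinset.erase C).card := by
    rw [Finset.mul_sum]
    calc ∑ c ∈ π.cycleFactorsFinset.erase C, 2 * c.support.card
        ≤ ∑ c ∈ π.cycleFactorsFinset.erase C, ((∑ i ∈ c.support, dN π i) + 2) :=
          Finset.sum_le_sum hrest
      _ = _ := by rw [Finset.sum_add_distrib, Finset.sum_const, smul_eq_mul, mul_comm]
  have hce : (π.cycleFactorsFinset.erase C).card + 1 = π.cycleFactorsFinset.card :=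
    Finset.card_erase_add_one hC
  have hshallow : invNum π + reflLen π = dispD π := hs
  omega

lemma exists_smaller_after (π : Equiv.Perm (Fin n)) (b : Fin n) (hb : (b : ℕ) < (π b : ℕ)) :
    ∃ k, b < k ∧ (π k : ℕ) < (π b : ℕ) := by
  by_contra hno
  push_neg at hno
  have hsub : (univ : Finset (Fin n)).filter (fun x : Fin n => (π x : ℕ) < (π b : ℕ))
      ⊆ (univ : Finset (Fin n)).filter (fun x : Fin n => (x : ℕ) < (b : ℕ)) := by
    intro x hx
    rw [Finset.mem_filter] at hx ⊢
    refine ⟨Finset.mem_univ _, ?_⟩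
    have h1 : ¬ b < x := fun h => absurd (hno x h) (by omega)
    rw [Fin.lt_def, not_lt] at h1
    have h2 : (x : ℕ) ≠ (b : ℕ) := by
      intro he
      have : x = b := Fin.ext he
      rw [this] at hx
      omega
    omega
  have hc1 : ((univ : Finset (Fin n)).filter
      (fun x : Fin n => (π x : ℕ) < (π b : ℕ))).card = (π b : ℕ) := by
    rw [card_filter_comp π (fun y : Fin n => (y : ℕ) < (π b : ℕ))]
    exact card_filter_val_lt _ (π b).isLt.le
  have hc2 := card_filter_val_lt (n := n) (b : ℕ) b.isLt.le
  have := Finset.card_le_card hsub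
  omega

lemma no_cross_inv (π : Equiv.Perm (Fin n)) (h321 : Avoids321 π) (b' a : Fin n)
    (hlt : b' < a) (haE : (a : ℕ) < (π a : ℕ)) (hba : (π a : ℕ) < (π b' : ℕ)) : False := by
  obtain ⟨k, hk1, hk2⟩ := exists_smaller_after π a haE
  exact h321 ⟨b', a, k, hlt, hk1, Fin.lt_def.mpr hk2, Fin.lt_def.mpr hba⟩

lemma no_inv_F (π : Equiv.Perm (Fin n)) (h321 : Avoids321 π) (a b : Fin n)
    (hab : a < b) (haF : (π a : ℕ) ≤ (a : ℕ)) (hba : (π b : ℕ) < (π a : ℕ)) : False := by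
  have hk : ∃ k, k < a ∧ (π a : ℕ) < (π k : ℕ) := by
    by_contra hno
    push_neg at hno
    have hb_mem : b ∈ (univ : Finset (Fin n)).filter
        (fun x : Fin n => (a : ℕ) < (x : ℕ)) :=
      Finset.mem_filter.mpr ⟨Finset.mem_univ _, Fin.lt_def.mp hab⟩
    have hsub : (univ : Finset (Fin n)).filter (fun x : Fin n => (π a : ℕ) < (π x : ℕ))
        ⊆ ((univ : Finset (Fin n)).filter
            (fun x : Fin n => (a : ℕ) < (x : ℕ))).erase b := by
      intro x hx
      rw [Finset.mem_filter] at hx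
      have hxb : x ≠ b := by
        intro he
        rw [he] at hx
        omega
      have hxa : ¬ x < a := fun h => absurd (hno x h) (by omega)
      rw [Fin.lt_def, not_lt] at hxa
      have hxa' : (x : ℕ) ≠ (a : ℕ) := by
        intro he
        have : x = a := Fin.ext he
        rw [this] at hx
        omega
      exact Finset.mem_erase.mpr ⟨hxb, Finset.mem_filter.mpr ⟨Finset.mem_univ _, by omega⟩⟩
    have hc1 : ((univ : Finset (Fin n)).filter
        (fun x : Fin n => (π a : ℕ) < (π x : ℕ))).card = n - ((π a : ℕ) + 1) := by
      rw [card_filter_comp π (fun y : Fin n => (π a : ℕ) < (y : ℕ))]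
      exact card_filter_val_gt _ (π a).isLt
    have hc2 := card_filter_val_gt (n := n) (a : ℕ) a.isLt
    have hcard := Finset.card_le_card hsub
    rw [Finset.card_erase_of_mem hb_mem, hc1, hc2] at hcard
    have hbn := b.isLt
    have hb' := Fin.lt_def.mp hab
    omega
  obtain ⟨k, hk1, hk2⟩ := hk
  exact h321 ⟨k, a, b, hk1, hab, Fin.lt_def.mpr hba, Fin.lt_def.mpr hk2⟩

lemma two_inv_le (π : Equiv.Perm (Fin n)) (h321 : Avoids321 π) :
    2 * invNum π ≤ dispD π := by
  classical
  have hinv : invNum π = ∑ a : Fin n,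
      ((univ : Finset (Fin n)).filter (fun b => a < b ∧ π b < π a)).card := by
    unfold invNum
    rw [Finset.card_filter, Fintype.sum_prod_type]
    exact Finset.sum_congr rfl (fun a _ => (Finset.card_filter _ _).symm)
  have hbound : ∀ a : Fin n,
      ((univ : Finset (Fin n)).filter (fun b => a < b ∧ π b < π a)).card
        ≤ (π a : ℕ) - (a : ℕ) := by
    intro a
    rcases le_or_gt (π a : ℕ) (a : ℕ) with hF | hE
    · have : (univ : Finset (Fin n)).filter (fun b => a < b ∧ π b < π a) = ∅ := by
        rw [Finset.eq_empty_iff_forall_notMem]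
        intro b hb
        rw [Finset.mem_filter] at hb
        exact no_inv_F π h321 a b hb.2.1 hF (Fin.lt_def.mp hb.2.2)
      rw [this]
      simp
    · have hWsub : (univ : Finset (Fin n)).filter (fun b : Fin n => (b : ℕ) < (a : ℕ))
          ⊆ (univ : Finset (Fin n)).filter (fun b : Fin n => (π b : ℕ) < (π a : ℕ)) := by
        intro b hb
        rw [Finset.mem_filter] at hb ⊢
        refine ⟨Finset.mem_univ _, ?_⟩
        by_contra hle
        push_neg at hle
        have hne : (π b : ℕ) ≠ (π a : ℕ) := by
          intro he
          have : b = a := π.injective (Fin.ext he)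
          omega
        exact no_cross_inv π h321 b a (Fin.lt_def.mpr hb.2) hE (by omega)
      have hBsub : (univ : Finset (Fin n)).filter (fun b => a < b ∧ π b < π a)
          ⊆ (univ : Finset (Fin n)).filter (fun b : Fin n => (π b : ℕ) < (π a : ℕ)) := by
        intro b hb
        rw [Finset.mem_filter] at hb ⊢
        exact ⟨Finset.mem_univ _, Fin.lt_def.mp hb.2.2⟩
      have hdisj : Disjoint
          ((univ : Finset (Fin n)).filter (fun b => a < b ∧ π b < π a))
          ((univ : Finset (Fin n)).filter (fun b : Fin n => (b : ℕ) < (a : ℕ))) := by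
        rw [Finset.disjoint_left]
        intro b hb hb'
        rw [Finset.mem_filter] at hb hb'
        have := Fin.lt_def.mp hb.2.1
        omega
      have hunion := Finset.card_le_card (Finset.union_subset hBsub hWsub)
      rw [Finset.card_union_of_disjoint hdisj] at hunion
      have hc1 : ((univ : Finset (Fin n)).filter
          (fun b : Fin n => (π b : ℕ) < (π a : ℕ))).card = (π a : ℕ) := by
        rw [card_filter_comp π (fun y : Fin n => (y : ℕ) < (π a : ℕ))]
        exact card_filter_val_lt _ (π a).isLt.le
      have hc2 := card_filter_val_lt (n := n) (a : ℕ) a.isLt.le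
      omega
  have hIle : invNum π ≤ ∑ a : Fin n, ((π a : ℕ) - (a : ℕ)) := by
    rw [hinv]
    exact Finset.sum_le_sum (fun a _ => hbound a)
  have hdisp : dispD π = 2 * ∑ a : Fin n, ((π a : ℕ) - (a : ℕ)) := by
    have h1 : (dispD π : ℤ) = ∑ a : Fin n, |(π a : ℤ) - (a : ℤ)| := by
      unfold dispD
      push_cast [Int.natCast_natAbs]
      rfl
    have h2 : ∀ a : Fin n, |(π a : ℤ) - (a : ℤ)|
        = 2 * (((π a : ℕ) - (a : ℕ) : ℕ) : ℤ) - ((π a : ℤ) - (a : ℤ)) := by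
      intro a
      rcases le_total ((a : ℕ)) ((π a : ℕ)) with h | h
      · rw [abs_of_nonneg (by push_cast; omega)]
        push_cast [Nat.cast_sub h]
        ring
      · rw [abs_of_nonpos (by push_cast; omega)]
        rw [Nat.sub_eq_zero_of_le h]
        push_cast
        ring
    have h3 : ∑ a : Fin n, ((π a : ℤ) - (a : ℤ)) = 0 := by
      rw [Finset.sum_sub_distrib]
      rw [Equiv.sum_comp π (fun x : Fin n => (x : ℤ))]
      exact sub_self _
    have h4 : (dispD π : ℤ) = 2 * ∑ a : Fin n, (((π a : ℕ) - (a : ℕ) : ℕ) : ℤ) := by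
      rw [h1, Finset.sum_congr rfl (fun a _ => h2 a), Finset.sum_sub_distrib, h3,
        sub_zero, Finset.mul_sum]
    have h5 : (dispD π : ℤ) = ((2 * ∑ a : Fin n, ((π a : ℕ) - (a : ℕ)) : ℕ) : ℤ) := by
      rw [h4]
      push_cast
      rw [Finset.mul_sum]
    exact_mod_cast h5
  omega

end Stmt19Aux

open Stmt19Aux in
theorem stmt19 (n : ℕ) (hn : 3 ≤ n) (π : Equiv.Perm (Fin n))
    (hs : IsShallow π) (h321 : Avoids321 π)
    (j : Fin n) (hj : (j : ℕ) + 2 < n) (hπj : (π j : ℕ) = n - 1) :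
    (∀ k : Fin n, (k : ℕ) = n - 1 → (π k : ℕ) = n - 2) ∧
      (∀ k : Fin n, (j : ℕ) + 2 ≤ (k : ℕ) → (π k : ℕ) = (k : ℕ) - 1) := by
  classical
  -- tail is strictly increasing
  have tmono : ∀ a b : Fin n, j < a → a < b → (π a : ℕ) < (π b : ℕ) := by
    intro a b hja hab
    by_contra h
    push_neg at h
    have hne : (π b : ℕ) ≠ (π a : ℕ) := by
      intro he
      have : b = a := π.injective (Fin.ext he)
      exact absurd this (ne_of_gt hab)
    have h1 : (π b : ℕ) < (π a : ℕ) := lt_of_le_of_ne h hne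
    have h2 : (π a : ℕ) < (π j : ℕ) := by
      have hne2 : (π a : ℕ) ≠ n - 1 := by
        intro he
        have : π a = π j := Fin.ext (by rw [he, hπj])
        exact absurd (π.injective this) (Fin.ne_of_gt hja)
      have := (π a).isLt
      omega
    exact h321 ⟨j, a, b, hja, hab, Fin.lt_def.mpr h1, Fin.lt_def.mpr h2⟩
  -- entries after j are strictly below their position
  have tbound : ∀ d : ℕ, ∀ k : Fin n, n - 1 - (k : ℕ) = d → j < k → (π k : ℕ) < (k : ℕ) := by
    intro d
    induction d with
    | zero =>
      intro k hd hk
      have hkv : (k : ℕ) = n - 1 := by have := k.isLt; omega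
      have hne : (π k : ℕ) ≠ n - 1 := by
        intro he
        have : π k = π j := Fin.ext (by rw [he, hπj])
        exact absurd (π.injective this) (Fin.ne_of_gt hk)
      have := (π k).isLt
      omega
    | succ d ih =>
      intro k hd hk
      have hklt : (k : ℕ) + 1 ≤ n - 1 := by have := k.isLt; omega
      have hk'lt : (k : ℕ) + 1 < n := by omega
      set k' : Fin n := ⟨(k : ℕ) + 1, hk'lt⟩ with hk'def
      have hkk' : k < k' := Fin.lt_def.mpr (by simp [hk'def])
      have h1 : (π k : ℕ) < (π k' : ℕ) := tmono k k' hk hkk'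
      have h2 : (π k' : ℕ) < (k' : ℕ) := ih k' (by simp [hk'def]; omega) (lt_trans hk hkk')
      have hk'v : (k' : ℕ) = (k : ℕ) + 1 := rfl
      omega
  have tbound' : ∀ k : Fin n, j < k → (π k : ℕ) < (k : ℕ) :=
    fun k hk => tbound _ k rfl hk
  have key : ∀ k : Fin n, (j : ℕ) + 2 ≤ (k : ℕ) → (π k : ℕ) = (k : ℕ) - 1 := by
    intro k hk
    by_contra hbad
    have hjk : j < k := Fin.lt_def.mpr (by omega)
    have hπk : (π k : ℕ) < (k : ℕ) := tbound' k hjk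
    have hπk2 : (π k : ℕ) + 2 ≤ (k : ℕ) := by omega
    have hk1n : (k : ℕ) - 1 < n := by have := k.isLt; omega
    set k' : Fin n := ⟨(k : ℕ) - 1, hk1n⟩ with hk'def
    have hjk' : j < k' := Fin.lt_def.mpr (by simp [hk'def]; omega)
    have hk'k : k' < k := Fin.lt_def.mpr (by simp [hk'def]; omega)
    have hπk' : (π k' : ℕ) < (π k : ℕ) := tmono k' k hjk' hk'k
    -- the cycle of j
    have hjsupp : j ∈ π.support := by
      rw [Equiv.Perm.mem_support]
      intro he
      have : (π j : ℕ) = (j : ℕ) := by rw [he]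
      omega
    set C := π.cycleOf j with hCdef
    have hC : C ∈ π.cycleFactorsFinset :=
      Equiv.Perm.cycleOf_mem_cycleFactorsFinset_iff.mpr hjsupp
    have hcyc := (Equiv.Perm.mem_cycleFactorsFinset_iff.mp hC).1
    have hSne : C.support.Nonempty := Finset.card_pos.mp
      (lt_of_lt_of_le (by norm_num) hcyc.two_le_card_support)
    have hjS : j ∈ C.support :=
      Equiv.Perm.mem_support_cycleOf_iff.mpr ⟨Equiv.Perm.SameCycle.refl _ _, hjsupp⟩
    have hπjS : π j ∈ C.support :=
      Equiv.Perm.mem_support_cycleOf_iff.mpr ⟨⟨1, by simp⟩, hjsupp⟩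
    set fm := C.support.min' hSne with hfmdef
    set fM := C.support.max' hSne with hfMdef
    have hm_le : (fm : ℕ) ≤ (j : ℕ) := C.support.min'_le j hjS
    have hM_eq : (fM : ℕ) = n - 1 := by
      have h1 := C.support.le_max' (π j) hπjS
      have h2 : (π j : ℕ) ≤ (fM : ℕ) := h1
      have := fM.isLt
      omega
    -- upper bound for the cycle displacement
    have hDCle : (∑ i ∈ C.support, dN π i) + 2 ≤ 2 * C.support.card :=
      percycle_upper π hs (two_inv_le π h321) hC
    -- interval structure
    have hsubIcc : C.support ⊆ Finset.Icc fm fM :=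
      fun x hx => Finset.mem_Icc.mpr ⟨C.support.min'_le _ hx, C.support.le_max' _ hx⟩
    have hcard_le : C.support.card ≤ (fM : ℕ) + 1 - (fm : ℕ) :=
      (Finset.card_le_card hsubIcc).trans_eq (Fin.card_Icc _ _)
    have hIcosub : Finset.Ico (fm : ℕ) (fM : ℕ) ⊆ Finset.range n := by
      intro g hg
      rw [Finset.mem_Ico] at hg
      rw [Finset.mem_range]
      have := fM.isLt
      omega
    have hcross : ∀ g ∈ Finset.Ico (fm : ℕ) (fM : ℕ), 2 ≤ (crossAt π C.support g).card := by
      intro g hg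
      rw [Finset.mem_Ico] at hg
      exact cross_two π hC hSne hg.1 hg.2
    have hsum : ∑ i ∈ C.support, dN π i
        = ∑ g ∈ Finset.range n, (crossAt π C.support g).card := disp_sum π C.support
    have hlow : 2 * ((fM : ℕ) - (fm : ℕ))
        ≤ ∑ g ∈ Finset.Ico (fm : ℕ) (fM : ℕ), (crossAt π C.support g).card := by
      have := Finset.card_nsmul_le_sum _ _ _ hcross
      rwa [Nat.card_Ico, smul_eq_mul, mul_comm] at this
    have hle2 : ∑ g ∈ Finset.Ico (fm : ℕ) (fM : ℕ), (crossAt π C.support g).card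
        ≤ ∑ g ∈ Finset.range n, (crossAt π C.support g).card :=
      Finset.sum_le_sum_of_subset hIcosub
    have hScard : C.support.card = (fM : ℕ) - (fm : ℕ) + 1 := by omega
    have hSIcc : C.support = Finset.Icc fm fM :=
      Finset.eq_of_subset_of_card_le hsubIcc (by rw [Fin.card_Icc]; omega)
    -- memberships of k and k'
    have hkS : k ∈ C.support := by
      rw [hSIcc, Finset.mem_Icc]
      constructor
      · show (fm : ℕ) ≤ (k : ℕ); omega
      · show (k : ℕ) ≤ (fM : ℕ); have := k.isLt; omega
    have hk'S : k' ∈ C.support := by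
      rw [hSIcc, Finset.mem_Icc]
      constructor
      · show (fm : ℕ) ≤ (k' : ℕ); simp [hk'def]; omega
      · show (k' : ℕ) ≤ (fM : ℕ); simp [hk'def]; omega
    -- the bad gap
    set g0 := (k : ℕ) - 2 with hg0def
    have hg0mem : g0 ∈ Finset.Ico (fm : ℕ) (fM : ℕ) := by
      rw [Finset.mem_Ico]
      have := k.isLt
      omega
    have h3cross : 3 ≤ (crossAt π C.support g0).card := by
      have hjne : j ≠ k' := by
        intro he
        have := congrArg (fun x : Fin n => (x : ℕ)) he
        simp [hk'def] at this
        omega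
      have hk'ne : k' ≠ k := Fin.ne_of_lt hk'k
      have hjnek : j ≠ k := Fin.ne_of_lt hjk
      have hsub3 : ({j, k', k} : Finset (Fin n)) ⊆ crossAt π C.support g0 := by
        intro x hx
        simp only [Finset.mem_insert, Finset.mem_singleton] at hx
        rcases hx with h | h | h
        · subst h
          refine Finset.mem_filter.mpr ⟨hjS, Or.inl ⟨by omega, ?_⟩⟩
          rw [hπj]
          have := k.isLt
          omega
        · subst h
          refine Finset.mem_filter.mpr ⟨hk'S, Or.inr ⟨?_, ?_⟩⟩
          · omega
          · simp [hk'def]; omega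
        · subst h
          exact Finset.mem_filter.mpr ⟨hkS, Or.inr ⟨by omega, by omega⟩⟩
      have hcard3 : ({j, k', k} : Finset (Fin n)).card = 3 := by
        rw [Finset.card_insert_of_notMem (by simp [hjne, hjnek]),
          Finset.card_insert_of_notMem (by simp [hk'ne]), Finset.card_singleton]
      calc 3 = ({j, k', k} : Finset (Fin n)).card := hcard3.symm
        _ ≤ _ := Finset.card_le_card hsub3
    -- final contradiction
    have hsplit : (crossAt π C.support g0).card
        + ∑ g ∈ (Finset.Ico (fm : ℕ) (fM : ℕ)).erase g0, (crossAt π C.support g).card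
        = ∑ g ∈ Finset.Ico (fm : ℕ) (fM : ℕ), (crossAt π C.support g).card :=
      Finset.add_sum_erase _ (fun g => (crossAt π C.support g).card) hg0mem
    have herase : ∀ g ∈ (Finset.Ico (fm : ℕ) (fM : ℕ)).erase g0,
        2 ≤ (crossAt π C.support g).card :=
      fun g hg => hcross g (Finset.erase_subset _ _ hg)
    have hlow2 : 2 * ((Finset.Ico (fm : ℕ) (fM : ℕ)).erase g0).card
        ≤ ∑ g ∈ (Finset.Ico (fm : ℕ) (fM : ℕ)).erase g0, (crossAt π C.support g).card := by
      have := Finset.card_nsmul_le_sum _ _ _ herase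
      rwa [smul_eq_mul, mul_comm] at this
    have hce : ((Finset.Ico (fm : ℕ) (fM : ℕ)).erase g0).card
        = ((fM : ℕ) - (fm : ℕ)) - 1 := by
      rw [Finset.card_erase_of_mem hg0mem, Nat.card_Ico]
    rw [Finset.mem_Ico] at hg0mem
    omega
  refine ⟨?_, key⟩
  intro k hk
  have h1 : (j : ℕ) + 2 ≤ (k : ℕ) := by omega
  have := key k h1
  omega
end
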